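/- arXiv:math/0606356 — 7 statements merged into one kernel-verified Lean document; each statement's English description precedes it below -/
import Mathlib

section
/- For all d ≥ 1, 1 ≤ j ≤ d, and 0 ≤ i ≤ d-1, A(d,i,j) = A(d, d-1-i, d+1-j). -/
open Finset

/-- The set of descent positions (0-based: `k ∈ descSet σ` means a descent between
the 1-based positions `k+1` and `k+2`) of a permutation of `Fin n`. -/
def descSet {n : ℕ} (σ : Equiv.Perm (Fin n)) : Finset (Fin n) :=
  Finset.univ.filter (fun k => ∃ m : Fin n, (m : ℕ) = (k : ℕ) + 1 ∧ σ m < σ k)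

/-- The number of descents of a permutation of `Fin n`. -/
def des {n : ℕ} (σ : Equiv.Perm (Fin n)) : ℕ := (descSet σ).card

/-- `A d i j` : the number of permutations `σ` of `{1,…,d}` with `σ(1) = j` and
exactly `i` descents (in particular `A d i j = 0` for `i < 0` or `i ≥ d`). -/
noncomputable def A (d : ℕ) (i : ℤ) (j : ℕ) : ℕ :=
  Nat.card {σ : Equiv.Perm (Fin d) //
    (∀ k : Fin d, (k : ℕ) = 0 → (σ k : ℕ) + 1 = j) ∧ (des σ : ℤ) = i}

lemma descSet_subset {d : ℕ} (σ : Equiv.Perm (Fin d)) :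
    descSet σ ⊆ Finset.univ.filter (fun k : Fin d => (k : ℕ) + 1 < d) := by
  intro k hk
  simp only [descSet, mem_filter, mem_univ, true_and] at hk ⊢
  obtain ⟨m, hm, -⟩ := hk
  have := m.isLt
  omega

lemma card_filter_succ_lt {d : ℕ} (hd : 1 ≤ d) :
    (Finset.univ.filter (fun k : Fin d => (k : ℕ) + 1 < d)).card = d - 1 := by
  have h : (Finset.univ.filter (fun k : Fin d => ¬ ((k : ℕ) + 1 < d))) = {⟨d - 1, by omega⟩} := by
    ext k
    simp only [mem_filter, mem_univ, true_and, mem_singleton, not_lt, Fin.ext_iff]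
    have := k.isLt
    omega
  have h2 := Finset.card_filter_add_card_filter_not
    (s := (Finset.univ : Finset (Fin d))) (p := fun k : Fin d => (k : ℕ) + 1 < d)
  rw [h] at h2
  simp only [Finset.card_singleton, Finset.card_univ, Fintype.card_fin] at h2
  omega

lemma descSet_rev {d : ℕ} (σ : Equiv.Perm (Fin d)) :
    descSet (Fin.revPerm * σ) =
      (Finset.univ.filter (fun k : Fin d => (k : ℕ) + 1 < d)) \ descSet σ := by
  ext k
  simp only [descSet, mem_sdiff, mem_filter, mem_univ, true_and, Equiv.Perm.mul_apply,
    Fin.revPerm_apply]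
  constructor
  · rintro ⟨m, hm, hlt⟩
    have hm' := m.isLt
    refine ⟨by omega, ?_⟩
    rintro ⟨m', hm', hlt'⟩
    have : m' = m := Fin.ext (by omega)
    subst this
    have := Fin.rev_lt_rev.mp hlt
    exact absurd hlt' (not_lt.mpr this.le)
  · rintro ⟨hk, hno⟩
    refine ⟨⟨k + 1, hk⟩, rfl, ?_⟩
    rw [Fin.rev_lt_rev]
    rcases lt_trichotomy (σ k) (σ ⟨(k : ℕ) + 1, hk⟩) with h | h | h
    · exact h
    · exfalso
      have : (⟨(k : ℕ) + 1, hk⟩ : Fin d) = k := σ.injective h.symm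
      simp [Fin.ext_iff] at this
    · exact absurd ⟨⟨k + 1, hk⟩, rfl, h⟩ hno

lemma des_le {d : ℕ} (hd : 1 ≤ d) (σ : Equiv.Perm (Fin d)) : des σ ≤ d - 1 := by
  have := Finset.card_le_card (descSet_subset σ)
  rwa [card_filter_succ_lt hd] at this

lemma des_rev {d : ℕ} (hd : 1 ≤ d) (σ : Equiv.Perm (Fin d)) :
    des (Fin.revPerm * σ) = d - 1 - des σ := by
  rw [des, descSet_rev, Finset.card_sdiff_of_subset (descSet_subset σ), card_filter_succ_lt hd]
  rfl

/-- The symmetry `A(d,i,j) = A(d, d-1-i, d+1-j)` for `d ≥ 1`, `1 ≤ j ≤ d`,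
`0 ≤ i ≤ d-1`. -/
theorem A_symmetry (d i j : ℕ) (hd : 1 ≤ d) (hj1 : 1 ≤ j) (hjd : j ≤ d)
    (hi : i ≤ d - 1) :
    A d (i : ℤ) j = A d ((d : ℤ) - 1 - i) (d + 1 - j) := by
  apply Nat.card_congr
  refine Equiv.subtypeEquiv (Equiv.mulLeft Fin.revPerm) (fun σ => ?_)
  have hrev := des_rev hd σ
  have hle := des_le hd σ
  constructor
  · rintro ⟨h1, h2⟩
    constructor
    · intro k hk
      have h := h1 k hk
      simp only [Equiv.coe_mulLeft, Equiv.Perm.mul_apply, Fin.revPerm_apply, Fin.val_rev]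
      have := (σ k).isLt
      omega
    · have hdes : des σ = i := by exact_mod_cast h2
      simp only [Equiv.coe_mulLeft]
      rw [hrev, hdes]
      have h1d : 1 ≤ d := hd
      push_cast [Nat.cast_sub (by omega : i ≤ d - 1), Nat.cast_sub h1d]
      omega
  · rintro ⟨h1, h2⟩
    constructor
    · intro k hk
      have h := h1 k hk
      simp only [Equiv.coe_mulLeft, Equiv.Perm.mul_apply, Fin.revPerm_apply, Fin.val_rev] at h
      have := (σ k).isLt
      omega
    · simp only [Equiv.coe_mulLeft] at h2
      rw [hrev] at h2
      have : ((d - 1 - des σ : ℕ) : ℤ) = (d : ℤ) - 1 - i := h2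
      have hcast : ((d - 1 - des σ : ℕ) : ℤ) = (d : ℤ) - 1 - des σ := by
        push_cast [Nat.cast_sub (by omega : des σ ≤ d - 1), Nat.cast_sub hd]
        ring
      rw [hcast] at this
      have : des σ = i := by omega
      exact_mod_cast this
end

section
/- For d ≥ 1, j ∈ {1,...,d+1}, and 0 ≤ i ≤ d, there is a bijection between pairs (S,σ), where S is a (j-1)-element subset of {1,...,d} and σ ∈ S_{d+1} has exactly i descents and σ(1) = j, and the set of signed permutations τ ∈ B_d with exactly i descents (in the type B sense) and exactly j-1 negative values. -/
open Finset

/-- A signed permutation of `{±1,…,±d}` (an element of the hyperoctahedral group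
`B_d`), encoded as an ordinary permutation together with a sign for each position. -/
abbrev SignedPerm (d : ℕ) := Equiv.Perm (Fin d) × (Fin d → Bool)

/-- The value `τ(k) ∈ ℤ` of a signed permutation at position `k ∈ {1,…,d}`
(1-based), with the convention `τ(0) = 0`. -/
def sval {d : ℕ} (τ : SignedPerm d) (k : ℕ) : ℤ :=
  if h : 1 ≤ k ∧ k ≤ d then
    (if τ.2 ⟨k - 1, by omega⟩ then -(((τ.1 ⟨k - 1, by omega⟩ : Fin d) : ℕ) + 1 : ℤ)
     else (((τ.1 ⟨k - 1, by omega⟩ : Fin d) : ℕ) + 1 : ℤ))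
  else 0

/-- The number of type-`B` descents of a signed permutation: the number of
`i ∈ {0,…,d-1}` with `τ(i) > τ(i+1)` (where `τ(0) = 0`). -/
def desB {d : ℕ} (τ : SignedPerm d) : ℕ :=
  ((Finset.range d).filter (fun k => sval τ (k + 1) < sval τ k)).card

/-- `N(τ)`: the number of `i ∈ {1,…,d}` with `τ(i) < 0`. -/
def negEntries {d : ℕ} (τ : SignedPerm d) : ℕ :=
  ((Finset.Icc 1 d).filter (fun k => sval τ k < 0)).card

/-- `B d i j`: the number of signed permutations in `B_d` with `i` type-`B`
descents and `j` negative entries. -/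
noncomputable def B (d i j : ℕ) : ℕ :=
  Nat.card {τ : SignedPerm d // desB τ = i ∧ negEntries τ = j}

-- ## helper lemmas
variable {d : ℕ}

lemma sval_zero (τ : SignedPerm d) : sval τ 0 = 0 := by simp [sval]

lemma sval_natAbs (τ : SignedPerm d) (k : ℕ) (h : 1 ≤ k ∧ k ≤ d) :
    (sval τ k).natAbs = ((τ.1 ⟨k - 1, by omega⟩ : Fin d) : ℕ) + 1 := by
  rw [sval, dif_pos h]
  split <;> omega

lemma sval_neg_iff (τ : SignedPerm d) (k : ℕ) (h : 1 ≤ k ∧ k ≤ d) :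
    (sval τ k < 0 ↔ τ.2 ⟨k - 1, by omega⟩ = true) := by
  rw [sval, dif_pos h]
  split <;> rename_i hb <;> simp [hb] <;> omega

lemma sval_ne_zero (τ : SignedPerm d) (k : ℕ) (h : 1 ≤ k ∧ k ≤ d) :
    sval τ k ≠ 0 := by
  intro h0
  have := sval_natAbs τ k h
  rw [h0] at this; simp at this

lemma sval_injOn (τ : SignedPerm d) (k m : ℕ) (hk : k ≤ d) (hm : m ≤ d)
    (h : sval τ k = sval τ m) : k = m := by
  rcases Nat.eq_zero_or_pos k with hk0 | hk1
  · rcases Nat.eq_zero_or_pos m with hm0 | hm1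
    · omega
    · exact absurd h.symm (by rw [hk0, sval_zero]; exact sval_ne_zero τ m ⟨hm1, hm⟩)
  · rcases Nat.eq_zero_or_pos m with hm0 | hm1
    · exact absurd h (by rw [hm0, sval_zero]; exact sval_ne_zero τ k ⟨hk1, hk⟩)
    · have h1 := sval_natAbs τ k ⟨hk1, hk⟩
      have h2 := sval_natAbs τ m ⟨hm1, hm⟩
      rw [h] at h1
      have : τ.1 ⟨k - 1, by omega⟩ = τ.1 ⟨m - 1, by omega⟩ := by
        apply Fin.ext; omega
      have := τ.1.injective this
      have := Fin.mk.injEq (k-1) _ (m-1) _ ▸ this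
      omega

-- descents of a word
def desW (d : ℕ) (w : ℕ → ℤ) : ℕ :=
  ((Finset.range d).filter (fun k => w (k + 1) < w k)).card

lemma desB_eq_desW (τ : SignedPerm d) : desB τ = desW d (sval τ) := rfl

def wP {d : ℕ} (σ : Equiv.Perm (Fin (d + 1))) : ℕ → ℤ :=
  fun k => if h : k < d + 1 then ((σ ⟨k, h⟩ : ℕ) : ℤ) else 0

lemma wP_val {d : ℕ} (σ : Equiv.Perm (Fin (d + 1))) (k : Fin (d + 1)) :
    wP σ (k : ℕ) = ((σ k : ℕ) : ℤ) := by
  simp only [wP, dif_pos k.isLt]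

lemma wP_val' {d : ℕ} (σ : Equiv.Perm (Fin (d + 1))) (k : ℕ) (hk : k < d + 1) :
    wP σ k = ((σ ⟨k, hk⟩ : ℕ) : ℤ) := wP_val σ ⟨k, hk⟩

lemma des_eq_desW (σ : Equiv.Perm (Fin (d + 1))) : des σ = desW d (wP σ) := by
  unfold des desW
  refine Finset.card_bij (fun k _ => (k : ℕ)) ?_ ?_ ?_
  · intro k hk
    simp only [descSet, mem_filter, mem_univ, true_and] at hk
    obtain ⟨m, hm1, hm2⟩ := hk
    have hkd : (k : ℕ) < d := by have := m.isLt; omega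
    simp only [mem_filter, mem_range]
    refine ⟨hkd, ?_⟩
    have hk1 : (k : ℕ) + 1 < d + 1 := by omega
    have : m = ⟨(k : ℕ) + 1, hk1⟩ := Fin.ext hm1
    subst this
    have e1 := wP_val σ (⟨(k:ℕ) + 1, hk1⟩ : Fin (d+1))
    have e2 := wP_val σ k
    simp only at e1 e2
    rw [e1, e2]
    exact_mod_cast hm2
  · intro a _ b _ h; exact Fin.ext h
  · intro k hk
    simp only [mem_filter, mem_range] at hk
    obtain ⟨hkd, hlt⟩ := hk
    refine ⟨⟨k, by omega⟩, ?_, rfl⟩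
    simp only [descSet, mem_filter, mem_univ, true_and]
    refine ⟨⟨k + 1, by omega⟩, rfl, ?_⟩
    have e1 := wP_val σ (⟨k + 1, by omega⟩ : Fin (d+1))
    have e2 := wP_val σ (⟨k, by omega⟩ : Fin (d+1))
    simp only at e1 e2
    rw [e1, e2] at hlt
    exact_mod_cast hlt

lemma desW_congr (w₁ w₂ : ℕ → ℤ)
    (h : ∀ k ≤ d, ∀ m ≤ d, (w₁ k < w₁ m ↔ w₂ k < w₂ m)) :
    desW d w₁ = desW d w₂ := by
  unfold desW
  congr 1
  apply Finset.filter_congr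
  intro k hk
  simp only [mem_range] at hk
  exact h (k+1) (by omega) k (by omega)

lemma negEntries_eq (τ : SignedPerm d) :
    negEntries τ = (Finset.univ.filter (fun a : Fin d => τ.2 a = true)).card := by
  unfold negEntries
  refine Finset.card_bij (fun k hk => (⟨k - 1, by
    simp only [mem_filter, mem_Icc] at hk; omega⟩ : Fin d)) ?_ ?_ ?_
  · intro k hk
    simp only [mem_filter, mem_Icc] at hk
    simp only [mem_filter, mem_univ, true_and]
    exact (sval_neg_iff τ k ⟨hk.1.1, hk.1.2⟩).mp hk.2
  · intro a ha b hb h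
    simp only [mem_filter, mem_Icc] at ha hb
    have := Fin.mk.injEq _ _ _ _ ▸ h
    omega
  · intro a ha
    simp only [mem_filter, mem_univ, true_and] at ha
    refine ⟨(a : ℕ) + 1, ?_, ?_⟩
    · simp only [mem_filter, mem_Icc]
      have := a.isLt
      refine ⟨⟨by omega, by omega⟩, ?_⟩
      rw [sval_neg_iff τ _ ⟨by omega, by omega⟩]
      have h2 : (⟨(a:ℕ) + 1 - 1, by omega⟩ : Fin d) = a := Fin.ext (by simp)
      rw [h2]
      exact ha
    · exact Fin.ext (by simp)
variable {d : ℕ}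

def VS (d : ℕ) (S : Finset (Fin d)) : Finset ℤ :=
  insert 0 ((S.image fun a : Fin d => -(((a : ℕ) : ℤ) + 1)) ∪
    (Sᶜ.image fun a : Fin d => (((a : ℕ) : ℤ) + 1)))

lemma mem_VS {S : Finset (Fin d)} {v : ℤ} :
    v ∈ VS d S ↔ v = 0 ∨ (∃ a ∈ S, v = -(((a : ℕ) : ℤ) + 1)) ∨
      (∃ a, a ∉ S ∧ v = (((a : ℕ) : ℤ) + 1)) := by
  simp only [VS, mem_insert, mem_union, mem_image, mem_compl]
  constructor
  · rintro (h | ⟨a, ha, rfl⟩ | ⟨a, ha, rfl⟩)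
    · exact Or.inl h
    · exact Or.inr (Or.inl ⟨a, ha, rfl⟩)
    · exact Or.inr (Or.inr ⟨a, ha, rfl⟩)
  · rintro (h | ⟨a, ha, rfl⟩ | ⟨a, ha, rfl⟩)
    · exact Or.inl h
    · exact Or.inr (Or.inl ⟨a, ha, rfl⟩)
    · exact Or.inr (Or.inr ⟨a, ha, rfl⟩)

lemma card_VS (S : Finset (Fin d)) : (VS d S).card = d + 1 := by
  have hinj1 : Set.InjOn (fun a : Fin d => -(((a : ℕ) : ℤ) + 1)) S := by
    intro a _ b _ h; simp only at h; exact Fin.ext (by omega)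
  have hinj2 : Set.InjOn (fun a : Fin d => (((a : ℕ) : ℤ) + 1)) (↑(Sᶜ) : Set (Fin d)) := by
    intro a _ b _ h; simp only at h; exact Fin.ext (by omega)
  have hdisj : Disjoint (S.image fun a : Fin d => -(((a : ℕ) : ℤ) + 1))
      (Sᶜ.image fun a : Fin d => (((a : ℕ) : ℤ) + 1)) := by
    rw [Finset.disjoint_left]
    intro v hv hv'
    simp only [mem_image] at hv hv'
    obtain ⟨a, _, ha⟩ := hv; obtain ⟨b, _, hb⟩ := hv'
    omega
  have h0 : (0 : ℤ) ∉ (S.image fun a : Fin d => -(((a : ℕ) : ℤ) + 1)) ∪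
      (Sᶜ.image fun a : Fin d => (((a : ℕ) : ℤ) + 1)) := by
    simp only [mem_union, mem_image]
    push_neg
    exact ⟨fun a _ => by omega, fun a _ => by omega⟩
  rw [VS, Finset.card_insert_of_notMem h0, Finset.card_union_of_disjoint hdisj,
    Finset.card_image_of_injOn hinj1, Finset.card_image_of_injOn hinj2]
  have := Finset.card_compl S
  simp only [Fintype.card_fin] at this
  have hS := Finset.card_le_univ S
  simp only [Finset.card_univ, Fintype.card_fin] at hS
  omega

lemma VS_natAbs_le {S : Finset (Fin d)} {v : ℤ} (hv : v ∈ VS d S) : v.natAbs ≤ d := by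
  rw [mem_VS] at hv
  rcases hv with h | ⟨a, _, h⟩ | ⟨a, _, h⟩
  · subst h; simp
  · subst h; have := a.isLt; omega
  · subst h; have := a.isLt; omega

lemma VS_inj_natAbs {S : Finset (Fin d)} {v u : ℤ} (hv : v ∈ VS d S) (hu : u ∈ VS d S)
    (h : v.natAbs = u.natAbs) : v = u := by
  rw [mem_VS] at hv hu
  rcases hv with h1 | ⟨a, ha, h1⟩ | ⟨a, ha, h1⟩ <;>
    rcases hu with h2 | ⟨b, hb, h2⟩ | ⟨b, hb, h2⟩ <;> subst h1 <;> subst h2 <;>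
    first
      | omega
      | (have hab : a = b := Fin.ext (by omega); subst hab;
         first | exact absurd ha hb | exact absurd hb ha | omega)

lemma neg_mem_VS_iff {S : Finset (Fin d)} {a : Fin d} :
    -(((a : ℕ) : ℤ) + 1) ∈ VS d S ↔ a ∈ S := by
  rw [mem_VS]
  constructor
  · rintro (h | ⟨b, hb, h⟩ | ⟨b, hb, h⟩)
    · omega
    · have : a = b := Fin.ext (by omega); subst this; exact hb
    · omega
  · intro h; exact Or.inr (Or.inl ⟨a, h, rfl⟩)

lemma VS_filter_neg (S : Finset (Fin d)) :
    (VS d S).filter (fun v => v < 0) = S.image fun a : Fin d => -(((a : ℕ) : ℤ) + 1) := by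
  ext v
  simp only [mem_filter, mem_VS, mem_image]
  constructor
  · rintro ⟨h | ⟨a, ha, h⟩ | ⟨a, ha, h⟩, hneg⟩
    · omega
    · exact ⟨a, ha, h.symm⟩
    · omega
  · rintro ⟨a, ha, h⟩
    exact ⟨Or.inr (Or.inl ⟨a, ha, h.symm⟩), by omega⟩

lemma card_VS_filter_neg (S : Finset (Fin d)) :
    ((VS d S).filter (fun v => v < 0)).card = S.card := by
  rw [VS_filter_neg]
  apply Finset.card_image_of_injOn
  intro a _ b _ h; simp only at h; exact Fin.ext (by omega)

lemma rank_eq {n : ℕ} {s : Finset ℤ} (e : Fin n ≃o {x // x ∈ s}) (k : Fin n) :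
    (s.filter (fun v => v < (e k : ℤ))).card = (k : ℕ) := by
  have himg : s.filter (fun v => v < (e k : ℤ)) = (Finset.Iio k).image (fun m => (e m : ℤ)) := by
    ext v
    simp only [mem_filter, mem_image, mem_Iio]
    constructor
    · rintro ⟨hv, hlt⟩
      refine ⟨e.symm ⟨v, hv⟩, ?_, by simp⟩
      rw [← e.lt_iff_lt, OrderIso.apply_symm_apply]
      exact Subtype.coe_lt_coe.mp hlt
    · rintro ⟨m, hm, h⟩
      subst h
      exact ⟨(e m).2, Subtype.coe_lt_coe.mpr (e.lt_iff_lt.mpr hm)⟩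
  rw [himg, Finset.card_image_of_injOn (fun a _ b _ h => e.injective (Subtype.ext h)),
    Fin.card_Iio]

-- ## the set of negated values of τ
def Sof (τ : SignedPerm d) : Finset (Fin d) :=
  (Finset.univ.filter fun a : Fin d => τ.2 a = true).image τ.1

lemma card_Sof (τ : SignedPerm d) : (Sof τ).card = negEntries τ := by
  rw [negEntries_eq, Sof, Finset.card_image_of_injective _ τ.1.injective]

lemma image_sval (τ : SignedPerm d) :
    (Finset.range (d + 1)).image (fun k => sval τ k) = VS d (Sof τ) := by
  ext v
  simp only [mem_image, mem_range, mem_VS]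
  constructor
  · rintro ⟨k, hk, rfl⟩
    rcases Nat.eq_zero_or_pos k with h0 | h1
    · subst h0; exact Or.inl (sval_zero τ)
    · have hb : 1 ≤ k ∧ k ≤ d := ⟨h1, by omega⟩
      have hna := sval_natAbs τ k hb
      by_cases hs : τ.2 ⟨k - 1, by omega⟩ = true
      · refine Or.inr (Or.inl ⟨τ.1 ⟨k - 1, by omega⟩, ?_, ?_⟩)
        · exact Finset.mem_image_of_mem _ (by simp [hs])
        · have := (sval_neg_iff τ k hb).mpr hs
          omega
      · refine Or.inr (Or.inr ⟨τ.1 ⟨k - 1, by omega⟩, ?_, ?_⟩)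
        · intro hmem
          simp only [Sof, mem_image, mem_filter, mem_univ, true_and] at hmem
          obtain ⟨b, hb2, hb1⟩ := hmem
          exact hs (by rwa [τ.1.injective hb1] at hb2)
        · have hnot : ¬ (sval τ k < 0) := fun h => hs ((sval_neg_iff τ k hb).mp h)
          omega
  · rintro (rfl | ⟨a, ha, rfl⟩ | ⟨a, ha, rfl⟩)
    · exact ⟨0, by omega, sval_zero τ⟩
    · simp only [Sof, mem_image, mem_filter, mem_univ, true_and] at ha
      obtain ⟨b, hb2, rfl⟩ := ha
      refine ⟨(b : ℕ) + 1, by have := b.isLt; omega, ?_⟩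
      have hb : 1 ≤ (b : ℕ) + 1 ∧ (b : ℕ) + 1 ≤ d := ⟨by omega, by have := b.isLt; omega⟩
      have hab : (⟨(b : ℕ) + 1 - 1, by omega⟩ : Fin d) = b := Fin.ext (by simp)
      have hna := sval_natAbs τ ((b : ℕ) + 1) hb
      have hneg := (sval_neg_iff τ ((b : ℕ) + 1) hb).mpr (by rwa [hab])
      rw [hab] at hna
      omega
    · obtain ⟨b, hba⟩ : ∃ b, τ.1 b = a := ⟨τ.1.symm a, τ.1.apply_symm_apply a⟩
      have hs : ¬ τ.2 b = true := by
        intro hs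
        apply ha
        simp only [Sof, mem_image, mem_filter, mem_univ, true_and]
        exact ⟨b, hs, hba⟩
      refine ⟨(b : ℕ) + 1, by have := b.isLt; omega, ?_⟩
      have hb : 1 ≤ (b : ℕ) + 1 ∧ (b : ℕ) + 1 ≤ d := ⟨by omega, by have := b.isLt; omega⟩
      have hab : (⟨(b : ℕ) + 1 - 1, by omega⟩ : Fin d) = b := Fin.ext (by simp)
      have hna := sval_natAbs τ ((b : ℕ) + 1) hb
      have hnot : ¬ (sval τ ((b : ℕ) + 1) < 0) := fun h =>
        hs (by rw [← hab]; exact (sval_neg_iff τ _ hb).mp h)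
      rw [hab, hba] at hna
      omega

lemma sval_mem_VS (τ : SignedPerm d) (k : Fin (d + 1)) :
    sval τ (k : ℕ) ∈ VS d (Sof τ) := by
  rw [← image_sval]
  exact Finset.mem_image_of_mem _ (Finset.mem_range.mpr k.isLt)

noncomputable def eS (S : Finset (Fin d)) : Fin (d + 1) ≃o {x // x ∈ VS d S} :=
  (VS d S).orderIsoOfFin (card_VS S)

lemma eS_congr {S S' : Finset (Fin d)} (h : S = S') (k : Fin (d + 1)) :
    ((eS S) k : ℤ) = ((eS S') k : ℤ) := by subst h; rfl

lemma zero_mem_VS (S : Finset (Fin d)) : (0 : ℤ) ∈ VS d S := mem_VS.mpr (Or.inl rfl)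

lemma card_le_d (S : Finset (Fin d)) : S.card ≤ d := by
  have hS := Finset.card_le_univ S
  simpa using hS

lemma eS_symm_zero (S : Finset (Fin d)) :
    (eS S).symm ⟨0, zero_mem_VS S⟩ = ⟨S.card, by have := card_le_d S; omega⟩ := by
  apply Fin.ext
  have h1 := rank_eq (eS S) ((eS S).symm ⟨0, zero_mem_VS S⟩)
  rw [OrderIso.apply_symm_apply] at h1
  show _ = S.card
  rw [← h1, show ((⟨0, zero_mem_VS S⟩ : {x // x ∈ VS d S}) : ℤ) = 0 from rfl]
  exact card_VS_filter_neg S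

noncomputable def Fσ (τ : SignedPerm d) : Equiv.Perm (Fin (d + 1)) :=
  Equiv.ofBijective (fun k => (eS (Sof τ)).symm ⟨sval τ (k : ℕ), sval_mem_VS τ k⟩)
    ((Finite.injective_iff_bijective).mp (by
      intro k m h
      have h2 : sval τ (k : ℕ) = sval τ (m : ℕ) :=
        congrArg Subtype.val ((eS (Sof τ)).symm.injective h)
      exact Fin.ext (sval_injOn τ _ _ (by omega) (by omega) h2)))

lemma Fσ_spec (τ : SignedPerm d) (k : Fin (d + 1)) :
    ((eS (Sof τ)) (Fσ τ k) : ℤ) = sval τ (k : ℕ) := by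
  show ((eS (Sof τ)) ((eS (Sof τ)).symm ⟨sval τ (k : ℕ), sval_mem_VS τ k⟩) : ℤ) = _
  rw [OrderIso.apply_symm_apply]

lemma Fσ_zero (τ : SignedPerm d) :
    Fσ τ ⟨0, by omega⟩ = ⟨(Sof τ).card, by have := card_le_d (Sof τ); omega⟩ := by
  show (eS (Sof τ)).symm ⟨sval τ ((⟨0, by omega⟩ : Fin (d+1)) : ℕ), _⟩ = _
  have : (⟨sval τ ((⟨0, by omega⟩ : Fin (d+1)) : ℕ), sval_mem_VS τ _⟩ :
      {x // x ∈ VS d (Sof τ)}) = ⟨0, zero_mem_VS (Sof τ)⟩ := Subtype.ext (sval_zero τ)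
  rw [this, eS_symm_zero]

-- ## the inverse construction
noncomputable def gw (S : Finset (Fin d)) (σ : Equiv.Perm (Fin (d + 1))) (k : Fin (d + 1)) : ℤ :=
  ((eS S) (σ k) : ℤ)

lemma gw_mem (S : Finset (Fin d)) (σ : Equiv.Perm (Fin (d + 1))) (k : Fin (d + 1)) :
    gw S σ k ∈ VS d S := ((eS S) (σ k)).2

lemma gw_zero (S : Finset (Fin d)) (σ : Equiv.Perm (Fin (d + 1)))
    (h0 : σ ⟨0, Nat.succ_pos d⟩ = ⟨S.card, Nat.lt_succ_of_le (card_le_d S)⟩) :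
    gw S σ ⟨0, by omega⟩ = 0 := by
  unfold gw
  rw [h0]
  have := eS_symm_zero S
  have h2 : (eS S) ⟨S.card, by have := card_le_d S; omega⟩ = ⟨0, zero_mem_VS S⟩ := by
    rw [← this, OrderIso.apply_symm_apply]
  rw [h2]

lemma gw_inj (S : Finset (Fin d)) (σ : Equiv.Perm (Fin (d + 1))) {k m : Fin (d + 1)}
    (h : gw S σ k = gw S σ m) : k = m :=
  σ.injective ((eS S).injective (Subtype.ext h))

lemma gw_ne_zero (S : Finset (Fin d)) (σ : Equiv.Perm (Fin (d + 1)))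
    (h0 : σ ⟨0, Nat.succ_pos d⟩ = ⟨S.card, Nat.lt_succ_of_le (card_le_d S)⟩)
    (a : Fin d) : gw S σ a.succ ≠ 0 := by
  intro h
  have h2 : gw S σ a.succ = gw S σ ⟨0, by omega⟩ := by rw [gw_zero S σ h0, h]
  have := gw_inj S σ h2
  exact (Fin.succ_ne_zero a) (by rw [this]; rfl)

lemma gw_natAbs_bound (S : Finset (Fin d)) (σ : Equiv.Perm (Fin (d + 1)))
    (h0 : σ ⟨0, Nat.succ_pos d⟩ = ⟨S.card, Nat.lt_succ_of_le (card_le_d S)⟩)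
    (a : Fin d) : 1 ≤ (gw S σ a.succ).natAbs ∧ (gw S σ a.succ).natAbs ≤ d := by
  have h1 := VS_natAbs_le (gw_mem S σ a.succ)
  have h2 := gw_ne_zero S σ h0 a
  omega

noncomputable def Gmap (S : Finset (Fin d)) (σ : Equiv.Perm (Fin (d + 1)))
    (h0 : σ ⟨0, Nat.succ_pos d⟩ = ⟨S.card, Nat.lt_succ_of_le (card_le_d S)⟩) :
    SignedPerm d :=
  (Equiv.ofBijective
    (fun a => (⟨(gw S σ a.succ).natAbs - 1, by
      have := gw_natAbs_bound S σ h0 a; omega⟩ : Fin d))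
    ((Finite.injective_iff_bijective).mp (by
      intro a b h
      have hab := gw_natAbs_bound S σ h0 a
      have hbb := gw_natAbs_bound S σ h0 b
      have h2 : (gw S σ a.succ).natAbs = (gw S σ b.succ).natAbs := by
        have := Fin.mk.injEq ((gw S σ a.succ).natAbs - 1) _ ((gw S σ b.succ).natAbs - 1) _ ▸ h
        omega
      have h3 := VS_inj_natAbs (gw_mem S σ a.succ) (gw_mem S σ b.succ) h2
      exact Fin.succ_injective d (gw_inj S σ h3))),
   fun a => decide (gw S σ a.succ < 0))

lemma Gmap_fst (S : Finset (Fin d)) (σ : Equiv.Perm (Fin (d + 1))) (h0 : σ ⟨0, Nat.succ_pos d⟩ = ⟨S.card, Nat.lt_succ_of_le (card_le_d S)⟩) (a : Fin d) :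
    ((Gmap S σ h0).1 a : ℕ) = (gw S σ a.succ).natAbs - 1 := rfl

lemma Gmap_snd (S : Finset (Fin d)) (σ : Equiv.Perm (Fin (d + 1))) (h0 : σ ⟨0, Nat.succ_pos d⟩ = ⟨S.card, Nat.lt_succ_of_le (card_le_d S)⟩) (a : Fin d) :
    (Gmap S σ h0).2 a = decide (gw S σ a.succ < 0) := rfl

lemma sval_Gmap (S : Finset (Fin d)) (σ : Equiv.Perm (Fin (d + 1))) (h0 : σ ⟨0, Nat.succ_pos d⟩ = ⟨S.card, Nat.lt_succ_of_le (card_le_d S)⟩) (k : Fin (d + 1)) :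
    sval (Gmap S σ h0) (k : ℕ) = gw S σ k := by
  induction k using Fin.cases with
  | zero => rw [show ((0 : Fin (d+1)) : ℕ) = 0 from rfl, sval_zero,
      (by rfl : (0 : Fin (d+1)) = ⟨0, by omega⟩), gw_zero S σ h0]
  | succ a =>
    have hb : 1 ≤ (a.succ : ℕ) ∧ (a.succ : ℕ) ≤ d := by
      simp only [Fin.val_succ]; have := a.isLt; omega
    have hsub : (⟨(a.succ : ℕ) - 1, by omega⟩ : Fin d) = a := Fin.ext (by simp)
    have hbound := gw_natAbs_bound S σ h0 a
    rw [sval, dif_pos hb]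
    rw [hsub]
    rw [Gmap_snd S σ h0 a]
    have hfst := Gmap_fst S σ h0 a
    by_cases hneg : gw S σ a.succ < 0
    · rw [if_pos (by simp [hneg])]
      rw [hfst]
      omega
    · rw [if_neg (by simp [hneg])]
      rw [hfst]
      omega

lemma sval_Gmap' (S : Finset (Fin d)) (σ : Equiv.Perm (Fin (d + 1)))
    (h0 : σ ⟨0, Nat.succ_pos d⟩ = ⟨S.card, Nat.lt_succ_of_le (card_le_d S)⟩)
    (k : ℕ) (hk : k < d + 1) :
    sval (Gmap S σ h0) k = gw S σ ⟨k, hk⟩ := sval_Gmap S σ h0 ⟨k, hk⟩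

-- ## properties of Fσ
lemma Fσ_lt_iff (τ : SignedPerm d) (k m : Fin (d + 1)) :
    Fσ τ k < Fσ τ m ↔ sval τ (k : ℕ) < sval τ (m : ℕ) := by
  show (eS (Sof τ)).symm ⟨sval τ (k : ℕ), _⟩ < (eS (Sof τ)).symm ⟨sval τ (m : ℕ), _⟩ ↔ _
  rw [(eS (Sof τ)).symm.lt_iff_lt]
  exact Subtype.mk_lt_mk

lemma des_Fσ (τ : SignedPerm d) : des (Fσ τ) = desB τ := by
  rw [des_eq_desW, desB_eq_desW]
  apply desW_congr
  intro k hk m hm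
  rw [wP_val' (Fσ τ) k (by omega), wP_val' (Fσ τ) m (by omega), Nat.cast_lt, ← Fin.lt_def]
  exact Fσ_lt_iff τ ⟨k, by omega⟩ ⟨m, by omega⟩

-- ## properties of Gmap
lemma gw_surj (S : Finset (Fin d)) (σ : Equiv.Perm (Fin (d + 1))) (h0 : σ ⟨0, Nat.succ_pos d⟩ = ⟨S.card, Nat.lt_succ_of_le (card_le_d S)⟩) (u : ℤ)
    (hu : u ∈ VS d S) (hne : u ≠ 0) : ∃ a : Fin d, gw S σ a.succ = u := by
  set x := σ.symm ((eS S).symm ⟨u, hu⟩) with hx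
  have hgx : gw S σ x = u := by
    unfold gw
    rw [hx, σ.apply_symm_apply, OrderIso.apply_symm_apply]
  have hx0 : x ≠ 0 := by
    intro h
    apply hne
    rw [← hgx, h, (by rfl : (0 : Fin (d+1)) = ⟨0, by omega⟩)]
    exact gw_zero S σ h0
  obtain ⟨a, ha⟩ := Fin.exists_succ_eq.mpr hx0
  exact ⟨a, by rw [ha, hgx]⟩

set_option maxHeartbeats 1000000 in
lemma desB_Gmap (S : Finset (Fin d)) (σ : Equiv.Perm (Fin (d + 1))) (h0 : σ ⟨0, Nat.succ_pos d⟩ = ⟨S.card, Nat.lt_succ_of_le (card_le_d S)⟩) :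
    desB (Gmap S σ h0) = des σ := by
  rw [des_eq_desW, desB_eq_desW]
  apply desW_congr
  intro k hk m hm
  rw [sval_Gmap' S σ h0 k (by omega), sval_Gmap' S σ h0 m (by omega),
    wP_val' σ k (by omega), wP_val' σ m (by omega)]
  unfold gw
  rw [Nat.cast_lt, ← Fin.lt_def, Subtype.coe_lt_coe, (eS S).lt_iff_lt]

lemma negEntries_Gmap (S : Finset (Fin d)) (σ : Equiv.Perm (Fin (d + 1))) (h0 : σ ⟨0, Nat.succ_pos d⟩ = ⟨S.card, Nat.lt_succ_of_le (card_le_d S)⟩) :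
    negEntries (Gmap S σ h0) = S.card := by
  rw [negEntries_eq, ← card_VS_filter_neg S]
  refine Finset.card_bij (fun a _ => gw S σ a.succ) ?_ ?_ ?_
  · intro a ha
    simp only [mem_filter, mem_univ, true_and, Gmap_snd, decide_eq_true_eq] at ha
    simp only [mem_filter]
    exact ⟨gw_mem S σ a.succ, ha⟩
  · intro a _ b _ h
    exact Fin.succ_injective d (gw_inj S σ h)
  · intro u hu
    simp only [mem_filter] at hu
    obtain ⟨a, ha⟩ := gw_surj S σ h0 u hu.1 (by omega)
    refine ⟨a, ?_, ha⟩
    simp only [mem_filter, mem_univ, true_and, Gmap_snd, decide_eq_true_eq]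
    rw [ha]; exact hu.2

lemma Sof_Gmap (S : Finset (Fin d)) (σ : Equiv.Perm (Fin (d + 1))) (h0 : σ ⟨0, Nat.succ_pos d⟩ = ⟨S.card, Nat.lt_succ_of_le (card_le_d S)⟩) :
    Sof (Gmap S σ h0) = S := by
  ext a
  simp only [Sof, mem_image, mem_filter, mem_univ, true_and]
  constructor
  · rintro ⟨b, hb2, hb1⟩
    rw [Gmap_snd, decide_eq_true_eq] at hb2
    have hval : ((Gmap S σ h0).1 b : ℕ) = (a : ℕ) := by rw [hb1]
    rw [Gmap_fst] at hval
    have hbound := gw_natAbs_bound S σ h0 b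
    have : gw S σ b.succ = -(((a : ℕ) : ℤ) + 1) := by omega
    rw [← neg_mem_VS_iff (S := S) (a := a), ← this]
    exact gw_mem S σ b.succ
  · intro ha
    have hu : -(((a : ℕ) : ℤ) + 1) ∈ VS d S := neg_mem_VS_iff.mpr ha
    obtain ⟨b, hb⟩ := gw_surj S σ h0 _ hu (by omega)
    refine ⟨b, ?_, ?_⟩
    · rw [Gmap_snd, decide_eq_true_eq, hb]; omega
    · apply Fin.ext
      rw [Gmap_fst, hb]
      have : (-(((a : ℕ) : ℤ) + 1)).natAbs = (a : ℕ) + 1 := by omega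
      omega

lemma Fσ_Gmap (S : Finset (Fin d)) (σ : Equiv.Perm (Fin (d + 1))) (h0 : σ ⟨0, Nat.succ_pos d⟩ = ⟨S.card, Nat.lt_succ_of_le (card_le_d S)⟩) :
    Fσ (Gmap S σ h0) = σ := by
  apply Equiv.ext
  intro k
  have hS : Sof (Gmap S σ h0) = S := Sof_Gmap S σ h0
  apply (eS S).injective
  apply Subtype.ext
  show ((eS S) (Fσ (Gmap S σ h0) k) : ℤ) = ((eS S) (σ k) : ℤ)
  rw [← eS_congr hS, Fσ_spec, sval_Gmap]
  rfl

lemma Gmap_Fσ (τ : SignedPerm d) :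
    Gmap (Sof τ) (Fσ τ) (Fσ_zero τ) = τ := by
  have hgw : ∀ k : Fin (d + 1), gw (Sof τ) (Fσ τ) k = sval τ (k : ℕ) := fun k => Fσ_spec τ k
  refine Prod.ext ?_ ?_
  · apply Equiv.ext
    intro a
    apply Fin.ext
    rw [Gmap_fst, hgw]
    have hb : 1 ≤ (a.succ : ℕ) ∧ (a.succ : ℕ) ≤ d := by
      simp only [Fin.val_succ]; have := a.isLt; omega
    have hna := sval_natAbs τ (a.succ : ℕ) hb
    have hsub : (⟨(a.succ : ℕ) - 1, by omega⟩ : Fin d) = a := Fin.ext (by simp)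
    rw [hsub] at hna
    omega
  · funext a
    show (Gmap (Sof τ) (Fσ τ) (Fσ_zero τ)).2 a = τ.2 a
    rw [Gmap_snd, hgw]
    have hb : 1 ≤ (a.succ : ℕ) ∧ (a.succ : ℕ) ≤ d := by
      simp only [Fin.val_succ]; have := a.isLt; omega
    have hneg := sval_neg_iff τ (a.succ : ℕ) hb
    have hsub : (⟨(a.succ : ℕ) - 1, by omega⟩ : Fin d) = a := Fin.ext (by simp)
    rw [hsub] at hneg
    cases h : τ.2 a
    · simp only [h, iff_false] at hneg ⊢
      simpa using hneg
    · simp only [h, iff_true] at hneg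
      simpa using hneg

lemma eq_of_sval_eq (τ τ' : SignedPerm d)
    (h : ∀ k : Fin (d + 1), sval τ (k : ℕ) = sval τ' (k : ℕ)) : τ = τ' := by
  refine Prod.ext ?_ ?_
  · apply Equiv.ext
    intro a
    apply Fin.ext
    have hb : 1 ≤ (a.succ : ℕ) ∧ (a.succ : ℕ) ≤ d := by
      simp only [Fin.val_succ]; have := a.isLt; omega
    have h1 := sval_natAbs τ (a.succ : ℕ) hb
    have h2 := sval_natAbs τ' (a.succ : ℕ) hb
    have hsub : (⟨(a.succ : ℕ) - 1, by omega⟩ : Fin d) = a := Fin.ext (by simp)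
    rw [hsub] at h1 h2
    rw [h a.succ] at h1
    omega
  · funext a
    have hb : 1 ≤ (a.succ : ℕ) ∧ (a.succ : ℕ) ≤ d := by
      simp only [Fin.val_succ]; have := a.isLt; omega
    have h1 := sval_neg_iff τ (a.succ : ℕ) hb
    have h2 := sval_neg_iff τ' (a.succ : ℕ) hb
    have hsub : (⟨(a.succ : ℕ) - 1, by omega⟩ : Fin d) = a := Fin.ext (by simp)
    rw [hsub] at h1 h2
    rw [h a.succ] at h1
    cases hx : τ.2 a <;> cases hy : τ'.2 a <;> simp [hx, hy] at h1 h2 ⊢ <;> omega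


/-- There is a bijection between pairs `(S,σ)` with `S` a `(j-1)`-subset of
`{1,…,d}` and `σ ∈ S_{d+1}` with `σ(1) = j` and `i` descents, and the signed
permutations `τ ∈ B_d` with `i` type-`B` descents and `j-1` negative entries. -/
theorem pairs_equiv_signed (d i j : ℕ) (hd : 1 ≤ d) (hj1 : 1 ≤ j)
    (hjd : j ≤ d + 1) (hi : i ≤ d) :
    Nonempty
      ({p : Finset (Fin d) × Equiv.Perm (Fin (d + 1)) //
          p.1.card = j - 1 ∧
          (∀ k : Fin (d + 1), (k : ℕ) = 0 → (p.2 k : ℕ) + 1 = j) ∧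
          des p.2 = i} ≃
        {τ : SignedPerm d // desB τ = i ∧ negEntries τ = j - 1}) := by
  have hF : ∀ τ : {τ : SignedPerm d // desB τ = i ∧ negEntries τ = j - 1},
      (Sof τ.1).card = j - 1 ∧
      (∀ k : Fin (d + 1), (k : ℕ) = 0 → ((Fσ τ.1) k : ℕ) + 1 = j) ∧
      des (Fσ τ.1) = i := by
    rintro ⟨τ, hdes, hneg⟩
    refine ⟨by rw [card_Sof]; exact hneg, ?_, by rw [des_Fσ]; exact hdes⟩
    intro k hk
    have hk0 : k = ⟨0, by omega⟩ := Fin.ext hk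
    rw [hk0, Fσ_zero]
    show (Sof τ).card + 1 = j
    rw [card_Sof, hneg]
    omega
  set F : {τ : SignedPerm d // desB τ = i ∧ negEntries τ = j - 1} →
      {p : Finset (Fin d) × Equiv.Perm (Fin (d + 1)) //
        p.1.card = j - 1 ∧
        (∀ k : Fin (d + 1), (k : ℕ) = 0 → (p.2 k : ℕ) + 1 = j) ∧
        des p.2 = i} :=
    fun τ => ⟨(Sof τ.1, Fσ τ.1), hF τ⟩ with hFdef
  have hbij : Function.Bijective F := by
    constructor
    · rintro ⟨τ₁, h₁⟩ ⟨τ₂, h₂⟩ h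
      simp only [hFdef, Subtype.mk.injEq, Prod.mk.injEq] at h
      obtain ⟨e1, e2⟩ := h
      apply Subtype.ext
      show τ₁ = τ₂
      apply eq_of_sval_eq
      intro k
      rw [← Fσ_spec τ₁ k, ← Fσ_spec τ₂ k, e2, eS_congr e1]
    · rintro ⟨⟨S, σ⟩, hcard, hσ0, hdes⟩
      have h00 : (σ ⟨0, Nat.succ_pos d⟩ : ℕ) + 1 = j := hσ0 ⟨0, Nat.succ_pos d⟩ rfl
      have hcard' : S.card = j - 1 := hcard
      have h0 : σ ⟨0, Nat.succ_pos d⟩ = ⟨S.card, Nat.lt_succ_of_le (card_le_d S)⟩ := by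
        apply Fin.ext
        show (σ ⟨0, Nat.succ_pos d⟩ : ℕ) = S.card
        omega
      refine ⟨⟨Gmap S σ h0, ?_, ?_⟩, ?_⟩
      · rw [desB_Gmap]; exact hdes
      · rw [negEntries_Gmap]; exact hcard'
      · apply Subtype.ext
        show (Sof (Gmap S σ h0), Fσ (Gmap S σ h0)) = (S, σ)
        exact Prod.ext (Sof_Gmap S σ h0) (Fσ_Gmap S σ h0)
  exact ⟨(Equiv.ofBijective F hbij).symm⟩
end

section
/- For all d ≥ 1, 1 ≤ j ≤ d+1, and 0 ≤ i ≤ d: binom(d, j-1) · A(d+1,i,j) = B(d,i,j-1), where B(d,i,k) is the number of signed permutations in B_d with i type-B descents and exactly k negative entries. -/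
open Finset

/-!
Extend a signed permutation `τ ∈ B_d` by `τ(0) = 0`. If `S` is the set of `a` for which `-(a + 1)`
is an entry, the values `τ(0), …, τ(d)` form the set `{0} ∪ {-(a + 1) | a ∈ S} ∪ {a + 1 | a ∉ S}`,
in which `0` has exactly `|S|` smaller elements. Standardizing the word `τ(0) τ(1) … τ(d)` therefore
gives `σ ∈ S_{d+1}` with the same descents and `σ(1) = |S| + 1`, and conversely `τ` is recovered
from `(S, σ)` by replacing each letter of `σ` by the element of that rank in the value set. So
`τ ↦ (S, σ)` is a bijection that turns type-`B` descents into descents and the number of negative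
entries into `|S|`; there are `binom(d, j - 1)` choices of `S` with `|S| = j - 1`.
-/

theorem Finset.card_filter_lt_orderEmbOfFin {α : Type*} [LinearOrder α] (s : Finset α) {k : ℕ}
    (h : #s = k) (i : Fin k) : #{x ∈ s | x < s.orderEmbOfFin h i} = i := by
  set f := s.orderEmbOfFin h
  have hs : univ.map f.toEmbedding = s := map_orderEmbOfFin_univ s h
  rw [← Fin.card_Iio, ← card_map f.toEmbedding, ← hs]
  congr 1
  ext x
  simp only [mem_filter, mem_map, mem_univ, true_and, mem_Iio, RelEmbedding.coe_toEmbedding]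
  constructor
  · rintro ⟨⟨a, rfl⟩, hlt⟩
    exact ⟨a, f.lt_iff_lt.mp hlt, rfl⟩
  · rintro ⟨a, hlt, rfl⟩
    exact ⟨⟨a, rfl⟩, f.lt_iff_lt.mpr hlt⟩

lemma des_eq_card_filter_succ_lt {n : ℕ} (σ : Equiv.Perm (Fin (n + 1))) :
    des σ = #{k : Fin n | σ k.succ < σ k.castSucc} := by
  have : descSet σ = ({k : Fin n | σ k.succ < σ k.castSucc} : Finset _).map Fin.castSuccEmb := by
    ext k
    simp only [descSet, mem_filter, mem_univ, true_and, mem_map, Fin.coe_castSuccEmb]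
    constructor
    · rintro ⟨m, hm, hlt⟩
      refine ⟨⟨k, by omega⟩, ?_, Fin.ext rfl⟩
      rwa [show (⟨k, _⟩ : Fin n).succ = m from Fin.ext hm.symm]
    · rintro ⟨k, hlt, rfl⟩
      exact ⟨k.succ, rfl, hlt⟩
  rw [des, this, card_map]

section ValueSet

variable {d : ℕ}

def signedVal (S : Finset (Fin d)) (a : Fin d) : ℤ :=
  if a ∈ S then -((a : ℤ) + 1) else (a : ℤ) + 1

lemma natAbs_signedVal (S : Finset (Fin d)) (a : Fin d) : (signedVal S a).natAbs = a + 1 := by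
  unfold signedVal; split <;> omega

lemma signedVal_neg_iff {S : Finset (Fin d)} {a : Fin d} : signedVal S a < 0 ↔ a ∈ S := by
  unfold signedVal; split <;> simp_all <;> omega

lemma signedVal_ne_zero (S : Finset (Fin d)) (a : Fin d) : signedVal S a ≠ 0 := by
  unfold signedVal; split <;> omega

lemma signedVal_injective (S : Finset (Fin d)) : Function.Injective (signedVal S) :=
  fun a b h => Fin.ext (by simpa [natAbs_signedVal] using congrArg Int.natAbs h)

/-- The set `{τ(0), …, τ(d)}` of values of any signed permutation whose negative entries
are `-(a + 1)` for `a ∈ S`. -/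
def valueSet (S : Finset (Fin d)) : Finset ℤ := insert 0 (univ.image (signedVal S))

lemma mem_valueSet {S : Finset (Fin d)} {v : ℤ} :
    v ∈ valueSet S ↔ v = 0 ∨ ∃ a, signedVal S a = v := by
  simp [valueSet]

lemma card_valueSet (S : Finset (Fin d)) : #(valueSet S) = d + 1 := by
  rw [valueSet, card_insert_of_notMem, card_image_of_injective _ (signedVal_injective S),
    card_univ, Fintype.card_fin]
  simpa using fun a => signedVal_ne_zero S a

lemma valueSet_injective : Function.Injective (valueSet (d := d)) := by
  suffices ∀ S T : Finset (Fin d), valueSet S = valueSet T → S ⊆ T from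
    fun S T h => (this S T h).antisymm (this T S h.symm)
  intro S T h a ha
  have hmem : signedVal S a ∈ valueSet T := h ▸ mem_valueSet.mpr (.inr ⟨a, rfl⟩)
  obtain h0 | ⟨b, hb⟩ := mem_valueSet.mp hmem
  · exact absurd h0 (signedVal_ne_zero S a)
  · have hab : b = a := Fin.ext (by simpa [natAbs_signedVal] using congrArg Int.natAbs hb)
    subst hab
    exact signedVal_neg_iff.mp (hb ▸ signedVal_neg_iff.mpr ha)

lemma card_filter_neg_valueSet (S : Finset (Fin d)) : #{v ∈ valueSet S | v < 0} = #S := by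
  have : {v ∈ valueSet S | v < 0} = S.image (signedVal S) := by
    ext v
    simp only [mem_filter, mem_valueSet, mem_image]
    constructor
    · rintro ⟨rfl | ⟨a, rfl⟩, hv⟩
      · exact absurd hv (lt_irrefl 0)
      · exact ⟨a, signedVal_neg_iff.mp hv, rfl⟩
    · rintro ⟨a, ha, rfl⟩
      exact ⟨.inr ⟨a, rfl⟩, signedVal_neg_iff.mpr ha⟩
  rw [this, card_image_of_injective _ (signedVal_injective S)]

lemma natAbs_le_of_mem_valueSet {S : Finset (Fin d)} {v : ℤ} (hv : v ∈ valueSet S) :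
    v.natAbs ≤ d := by
  obtain rfl | ⟨a, rfl⟩ := mem_valueSet.mp hv
  · simp
  · rw [natAbs_signedVal]; exact a.isLt

lemma eq_of_natAbs_eq_of_mem_valueSet {S : Finset (Fin d)} {v w : ℤ} (hv : v ∈ valueSet S)
    (hw : w ∈ valueSet S) (hv0 : v ≠ 0) (hw0 : w ≠ 0) (h : v.natAbs = w.natAbs) : v = w := by
  obtain rfl | ⟨a, rfl⟩ := mem_valueSet.mp hv
  · exact absurd rfl hv0
  obtain rfl | ⟨b, rfl⟩ := mem_valueSet.mp hw
  · exact absurd rfl hw0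
  rw [natAbs_signedVal, natAbs_signedVal] at h
  rw [Fin.ext (by omega : (a : ℕ) = b)]

noncomputable def valueEmb (S : Finset (Fin d)) : Fin (d + 1) ↪o ℤ :=
  (valueSet S).orderEmbOfFin (card_valueSet S)

lemma valueEmb_mem (S : Finset (Fin d)) (t : Fin (d + 1)) : valueEmb S t ∈ valueSet S :=
  orderEmbOfFin_mem _ _ t

lemma valueEmb_eq_zero_iff {S : Finset (Fin d)} {t : Fin (d + 1)} :
    valueEmb S t = 0 ↔ (t : ℕ) = #S := by
  have rank : ∀ t, valueEmb S t = 0 → (t : ℕ) = #S := fun t ht => by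
    rw [← card_filter_neg_valueSet, ← card_filter_lt_orderEmbOfFin _ (card_valueSet S) t]
    exact congrArg _ (filter_congr fun v _ => by rw [← ht]; rfl)
  refine ⟨rank t, fun h => ?_⟩
  obtain ⟨t₀, ht₀⟩ : (0 : ℤ) ∈ Set.range (valueEmb S) := by
    rw [valueEmb, range_orderEmbOfFin]; exact mem_insert_self _ _
  rwa [show t = t₀ from Fin.ext (h.trans (rank t₀ ht₀).symm)]

end ValueSet

section SignedPerm

variable {d : ℕ}

lemma sval_succ (τ : SignedPerm d) (m : Fin d) :
    sval τ (m + 1) = if τ.2 m then -((τ.1 m : ℤ) + 1) else (τ.1 m : ℤ) + 1 := by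
  rw [sval, dif_pos ⟨by omega, m.isLt⟩]
  simp

/-- The absolute values `|τ(m)| - 1` of the negative entries of `τ`. -/
def negSet (τ : SignedPerm d) : Finset (Fin d) :=
  ({m | τ.2 m} : Finset (Fin d)).map τ.1.toEmbedding

lemma sval_succ_eq_signedVal (τ : SignedPerm d) (m : Fin d) :
    sval τ (m + 1) = signedVal (negSet τ) (τ.1 m) := by
  simp [sval_succ, signedVal, negSet]

lemma natAbs_sval_succ (τ : SignedPerm d) (m : Fin d) :
    (sval τ (m + 1)).natAbs = τ.1 m + 1 := by
  rw [sval_succ_eq_signedVal, natAbs_signedVal]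

lemma sval_succ_neg_iff (τ : SignedPerm d) (m : Fin d) : sval τ (m + 1) < 0 ↔ τ.2 m := by
  simp [sval_succ_eq_signedVal, signedVal_neg_iff, negSet]

lemma SignedPerm.ext_sval {τ τ' : SignedPerm d}
    (h : ∀ t : Fin (d + 1), sval τ t = sval τ' t) : τ = τ' := by
  have h' (m : Fin d) : sval τ (m + 1) = sval τ' (m + 1) := h m.succ
  refine Prod.ext (Equiv.ext fun m => Fin.ext ?_) (funext fun m => Bool.eq_iff_iff.mpr ?_)
  · simpa [natAbs_sval_succ] using congrArg Int.natAbs (h' m)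
  · rw [← sval_succ_neg_iff, ← sval_succ_neg_iff, h' m]

lemma negEntries_eq_card_negSet (τ : SignedPerm d) : negEntries τ = #(negSet τ) := by
  rw [negSet, card_map, negEntries]
  symm
  refine card_bij (fun m _ => (m : ℕ) + 1) (fun m hm => ?_) (fun m _ m' _ h => ?_) (fun k hk => ?_)
  · simp only [mem_filter, mem_univ, true_and] at hm
    simp only [mem_filter, mem_Icc, sval_succ_neg_iff]
    exact ⟨⟨by omega, m.isLt⟩, hm⟩
  · exact Fin.ext (by simpa using h)
  · simp only [mem_filter, mem_Icc] at hk
    have hk' := sval_succ_neg_iff τ ⟨k - 1, by omega⟩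
    simp only [show k - 1 + 1 = k by omega] at hk'
    exact ⟨⟨k - 1, by omega⟩, by simpa [← hk'] using hk.2, by simp; omega⟩

lemma image_sval_eq_valueSet (τ : SignedPerm d) :
    univ.image (fun t : Fin (d + 1) => sval τ t) = valueSet (negSet τ) := by
  ext v
  simp only [mem_image, mem_univ, true_and, mem_valueSet]
  constructor
  · rintro ⟨t, rfl⟩
    cases t using Fin.cases with
    | zero => exact .inl (sval_zero τ)
    | succ m => exact .inr ⟨τ.1 m, by rw [Fin.val_succ, sval_succ_eq_signedVal]⟩
  · rintro (rfl | ⟨a, rfl⟩)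
    · exact ⟨0, sval_zero τ⟩
    · exact ⟨(τ.1.symm a).succ, by rw [Fin.val_succ, sval_succ_eq_signedVal, τ.1.apply_symm_apply]⟩

lemma sval_injective (τ : SignedPerm d) : Function.Injective (fun t : Fin (d + 1) => sval τ t) := by
  have hcard : #(univ.image fun t : Fin (d + 1) => sval τ t) = #(univ : Finset (Fin (d + 1))) := by
    rw [image_sval_eq_valueSet, card_valueSet, card_univ, Fintype.card_fin]
  simpa using injOn_of_card_image_eq hcard

lemma desB_eq_des_of_sval_eq {τ : SignedPerm d} {σ : Equiv.Perm (Fin (d + 1))}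
    {f : Fin (d + 1) → ℤ} (hf : StrictMono f) (h : ∀ t : Fin (d + 1), sval τ t = f (σ t)) :
    desB τ = des σ := by
  have hrange : range d = (univ : Finset (Fin d)).map Fin.valEmbedding := by
    rw [Fin.map_valEmbedding_univ, Nat.Iio_eq_range]
  rw [desB, hrange, filter_map, card_map, des_eq_card_filter_succ_lt]
  congr 1
  refine filter_congr fun k _ => ?_
  have h₁ := h k.succ
  have h₀ := h k.castSucc
  rw [Fin.val_succ] at h₁
  rw [Fin.val_castSucc] at h₀
  simp only [Function.comp, Fin.valEmbedding_apply, h₁, h₀, hf.lt_iff_lt]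

end SignedPerm

section Bijection

variable {d : ℕ} {S : Finset (Fin d)} {σ : Equiv.Perm (Fin (d + 1))}

lemma valueEmb_succ_ne_zero (hσ : (σ 0 : ℕ) = #S) (m : Fin d) : valueEmb S (σ m.succ) ≠ 0 :=
  fun h => Fin.succ_ne_zero m (σ.injective (Fin.ext ((valueEmb_eq_zero_iff.mp h).trans hσ.symm)))

noncomputable def absIndex (S : Finset (Fin d)) (σ : Equiv.Perm (Fin (d + 1))) (m : Fin d) :
    Fin d :=
  ⟨(valueEmb S (σ m.succ)).natAbs - 1, by
    have := natAbs_le_of_mem_valueSet (valueEmb_mem S (σ m.succ)); have := m.isLt; omega⟩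

lemma absIndex_injective (hσ : (σ 0 : ℕ) = #S) : Function.Injective (absIndex S σ) := by
  intro m m' h
  have h₀ := valueEmb_succ_ne_zero hσ m
  have h₀' := valueEmb_succ_ne_zero hσ m'
  have habs : (valueEmb S (σ m.succ)).natAbs = (valueEmb S (σ m'.succ)).natAbs := by
    simp only [absIndex, Fin.mk.injEq] at h; omega
  exact Fin.succ_injective _ <| σ.injective <| (valueEmb S).injective <|
    eq_of_natAbs_eq_of_mem_valueSet (valueEmb_mem _ _) (valueEmb_mem _ _) h₀ h₀' habs

noncomputable def ofPerm (S : Finset (Fin d)) (σ : Equiv.Perm (Fin (d + 1)))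
    (hσ : (σ 0 : ℕ) = #S) : SignedPerm d :=
  (Equiv.ofBijective (absIndex S σ) (Finite.injective_iff_bijective.mp (absIndex_injective hσ)),
    fun m => decide (valueEmb S (σ m.succ) < 0))

lemma sval_ofPerm (hσ : (σ 0 : ℕ) = #S) (t : Fin (d + 1)) :
    sval (ofPerm S σ hσ) t = valueEmb S (σ t) := by
  cases t using Fin.cases with
  | zero => exact (sval_zero _).trans (valueEmb_eq_zero_iff.mpr hσ).symm
  | succ m =>
    have h₀ := valueEmb_succ_ne_zero hσ m
    rw [Fin.val_succ, sval_succ]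
    simp only [ofPerm, absIndex, Equiv.ofBijective_apply, decide_eq_true_eq]
    split <;> omega

/-- The permutation of `{0, …, d}` with the same relative order as `τ(0), …, τ(d)`. -/
noncomputable def standardize (τ : SignedPerm d) : Equiv.Perm (Fin (d + 1)) :=
  Equiv.ofBijective
    (fun t => ((valueSet (negSet τ)).orderIsoOfFin (card_valueSet _)).symm
      ⟨sval τ t, image_sval_eq_valueSet τ ▸ mem_image_of_mem _ (mem_univ t)⟩)
    (Finite.injective_iff_bijective.mp fun _ _ h => sval_injective τ
      (Subtype.ext_iff.mp ((OrderIso.injective _) h)))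

lemma valueEmb_standardize (τ : SignedPerm d) (t : Fin (d + 1)) :
    valueEmb (negSet τ) (standardize τ t) = sval τ t := by
  simp [valueEmb, standardize, ← coe_orderIsoOfFin_apply]

lemma standardize_zero (τ : SignedPerm d) : (standardize τ 0 : ℕ) = #(negSet τ) :=
  valueEmb_eq_zero_iff.mp ((valueEmb_standardize τ 0).trans (sval_zero τ))

lemma negSet_ofPerm (hσ : (σ 0 : ℕ) = #S) : negSet (ofPerm S σ hσ) = S := by
  apply valueSet_injective
  rw [← image_sval_eq_valueSet]
  simp_rw [sval_ofPerm]
  change univ.image (valueEmb S ∘ σ) = _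
  rw [← image_image, image_univ_equiv, valueEmb, image_orderEmbOfFin_univ]

lemma standardize_ofPerm (hσ : (σ 0 : ℕ) = #S) : standardize (ofPerm S σ hσ) = σ := by
  ext t
  have h := valueEmb_standardize (ofPerm S σ hσ) t
  rw [negSet_ofPerm, sval_ofPerm] at h
  exact congrArg Fin.val ((valueEmb S).injective h)

lemma ofPerm_standardize (τ : SignedPerm d) :
    ofPerm (negSet τ) (standardize τ) (standardize_zero τ) = τ :=
  SignedPerm.ext_sval fun t => by rw [sval_ofPerm, valueEmb_standardize]

lemma desB_ofPerm (hσ : (σ 0 : ℕ) = #S) : desB (ofPerm S σ hσ) = des σ :=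
  desB_eq_des_of_sval_eq (valueEmb S).strictMono (sval_ofPerm hσ)

lemma desB_eq_des_standardize (τ : SignedPerm d) : desB τ = des (standardize τ) :=
  desB_eq_des_of_sval_eq (valueEmb _).strictMono fun t => (valueEmb_standardize τ t).symm

lemma card_filter_desB_negEntries (i k : ℕ) :
    #{τ : SignedPerm d | desB τ = i ∧ negEntries τ = k} =
      #(powersetCard k (univ : Finset (Fin d)) ×ˢ
        ({σ : Equiv.Perm (Fin (d + 1)) | (σ 0 : ℕ) = k ∧ des σ = i} : Finset _)) := by
  symm
  refine card_bij' (fun p hp => ofPerm p.1 p.2 ?hσ) (fun τ _ => (negSet τ, standardize τ))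
    ?_ ?_ ?_ ?_
  case hσ =>
    simp only [mem_product, mem_powersetCard, mem_filter] at hp
    exact hp.2.2.1.trans hp.1.2.symm
  · intro p hp
    simp only [mem_product, mem_powersetCard, mem_filter, mem_univ, true_and] at hp ⊢
    rw [desB_ofPerm, negEntries_eq_card_negSet, negSet_ofPerm]
    exact ⟨hp.2.2, hp.1.2⟩
  · intro τ hτ
    simp only [mem_product, mem_powersetCard, mem_filter, mem_univ, true_and] at hτ ⊢
    rw [standardize_zero, ← negEntries_eq_card_negSet, ← desB_eq_des_standardize]
    exact ⟨⟨subset_univ _, hτ.2⟩, hτ.2, hτ.1⟩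
  · intro p _
    exact Prod.ext (negSet_ofPerm _) (standardize_ofPerm _)
  · intro τ _
    exact ofPerm_standardize τ

end Bijection

theorem choose_mul_A_eq_B_general (d i j : ℕ) (hj1 : 1 ≤ j) :
    d.choose (j - 1) * A (d + 1) (i : ℤ) j = B d i (j - 1) := by
  have hA : A (d + 1) i j = #{σ : Equiv.Perm (Fin (d + 1)) | (σ 0 : ℕ) = j - 1 ∧ des σ = i} := by
    rw [A, Nat.card_eq_fintype_card, Fintype.card_subtype]
    congr 1
    refine filter_congr fun σ _ => and_congr ⟨fun h => ?_, fun h k hk => ?_⟩ Nat.cast_inj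
    · have := h 0 rfl; omega
    · rw [show k = 0 from Fin.ext hk]; omega
  rw [hA, B, Nat.card_eq_fintype_card, Fintype.card_subtype, card_filter_desB_negEntries,
    card_product, card_powersetCard, card_univ, Fintype.card_fin]

/-- For `d ≥ 1`, `1 ≤ j ≤ d+1`, `0 ≤ i ≤ d`:
`binom(d, j-1) · A(d+1,i,j) = B(d,i,j-1)`. -/
theorem choose_mul_A_eq_B (d i j : ℕ) (hd : 1 ≤ d) (hj1 : 1 ≤ j)
    (hjd : j ≤ d + 1) (hi : i ≤ d) :
    d.choose (j - 1) * A (d + 1) (i : ℤ) j = B d i (j - 1) :=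
  choose_mul_A_eq_B_general d i j hj1
end

section
/- For d ≥ 1, a subset S = {s_1 < ... < s_k} ⊆ {1,...,d}, and 0 ≤ r ≤ d, the number of permutations σ ∈ S_{d+1} with descent set contained in S and σ(d+1) = d+1-r equals the multinomial coefficient binom(s_k; s_k - s_{k-1}, ..., s_2 - s_1, s_1) times binom(d-r, d-s_k). -/
open Finset

/-!
A permutation whose descent positions all lie in `S = {s_0 < … < s_k}` is increasing from
position `s_k` on, so it is determined by the set `B` of its values there together with the
relative order of its first `s_k` values; that relative order is a permutation of `Fin s_k` whose
descents again lie in `S`, and every such pair `(τ, B)` is realised. Cutting off the blocks one at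
a time turns the multinomial coefficient into the telescoping product `∏ binom(s_{m+1}, s_m)`.
For the last block the condition `σ(d+1) = d+1-r` says that `max B = d+1-r`, and the sets of size
`d+1-s_k` with that maximum are counted by `binom(d-r, d-s_k)`.
-/

open Equiv

lemma mem_descSet_iff {n : ℕ} (σ : Perm (Fin n)) (p : Fin n) :
    p ∈ descSet σ ↔ ∃ h : (p : ℕ) + 1 < n, σ ⟨p + 1, h⟩ < σ p := by
  simp only [descSet, mem_filter, mem_univ, true_and]
  constructor
  · rintro ⟨⟨m, hmn⟩, hm, hlt⟩
    subst hm
    exact ⟨hmn, hlt⟩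
  · rintro ⟨h, hlt⟩
    exact ⟨_, rfl, hlt⟩

namespace Equiv.Perm

lemma eq_one_of_strictMono {n : ℕ} {σ : Perm (Fin n)} (hσ : StrictMono σ) : σ = 1 :=
  Equiv.ext <| congrFun <| (hσ.range_inj strictMono_id).mp <| by simp

lemma eq_of_lt_iff_lt {n : ℕ} {σ τ : Perm (Fin n)} (h : ∀ x y, σ x < σ y ↔ τ x < τ y) :
    σ = τ := by
  have : StrictMono ⇑(σ * τ⁻¹) := fun x y hxy => by
    simpa [h] using hxy
  simpa [mul_inv_eq_one] using eq_one_of_strictMono this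

end Equiv.Perm

lemma card_filter_le_val (n j : ℕ) : #(univ.filter fun p : Fin n => j ≤ (p : ℕ)) = n - j := by
  have : (univ.filter fun p : Fin n => j ≤ (p : ℕ)).map Fin.valEmbedding = Ico j n := by
    ext x
    simp only [mem_map, mem_filter, mem_univ, true_and, Fin.valEmbedding_apply, mem_Ico]
    constructor
    · rintro ⟨a, h, rfl⟩
      exact ⟨h, a.isLt⟩
    · intro h
      exact ⟨⟨x, h.2⟩, h.1, rfl⟩
  rw [← card_map, this, Nat.card_Ico]

section Split

variable {n j : ℕ}

def imageFrom (j : ℕ) (σ : Perm (Fin n)) : Finset (Fin n) :=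
  (univ.filter fun p : Fin n => j ≤ (p : ℕ)).image σ

lemma mem_imageFrom {σ : Perm (Fin n)} {x : Fin n} :
    x ∈ imageFrom j σ ↔ ∃ p : Fin n, j ≤ (p : ℕ) ∧ σ p = x := by
  simp [imageFrom]

lemma card_imageFrom (σ : Perm (Fin n)) : #(imageFrom j σ) = n - j := by
  rw [imageFrom, card_image_of_injective _ σ.injective, card_filter_le_val]

lemma card_compl_of_card_eq_sub (hj : j ≤ n) {B : Finset (Fin n)} (hB : #B = n - j) : #Bᶜ = j := by
  rw [card_compl, hB, Fintype.card_fin]; omega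

lemma apply_castLE_mem_compl_imageFrom (hj : j ≤ n) (σ : Perm (Fin n)) (x : Fin j) :
    σ (Fin.castLE hj x) ∈ (imageFrom j σ)ᶜ := by
  rw [mem_compl, mem_imageFrom]
  rintro ⟨p, hp, hpx⟩
  have := congrArg Fin.val (σ.injective hpx)
  simp only [Fin.val_castLE] at this
  omega

/-- The standardization of `σ` restricted to the positions `0, …, j - 1`. -/
noncomputable def patternBelow (hj : j ≤ n) (σ : Perm (Fin n)) : Perm (Fin j) :=
  Equiv.ofBijective
    (fun x =>
      ((imageFrom j σ)ᶜ.orderIsoOfFin (card_compl_of_card_eq_sub hj (card_imageFrom σ))).symm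
      ⟨σ (Fin.castLE hj x), apply_castLE_mem_compl_imageFrom hj σ x⟩)
    (Finite.injective_iff_bijective.mp fun _ _ hxy =>
      Fin.castLE_injective hj (σ.injective (Subtype.ext_iff.mp (OrderIso.injective _ hxy))))

lemma orderEmbOfFin_patternBelow (hj : j ≤ n) (σ : Perm (Fin n)) (x : Fin j) :
    (imageFrom j σ)ᶜ.orderEmbOfFin (card_compl_of_card_eq_sub hj (card_imageFrom σ))
        (patternBelow hj σ x) =
      σ (Fin.castLE hj x) := by
  rw [← coe_orderIsoOfFin_apply, patternBelow, ofBijective_apply, OrderIso.apply_symm_apply]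

lemma patternBelow_lt_patternBelow_iff (hj : j ≤ n) (σ : Perm (Fin n)) {x y : Fin j} :
    patternBelow hj σ x < patternBelow hj σ y ↔ σ (Fin.castLE hj x) < σ (Fin.castLE hj y) := by
  rw [← orderEmbOfFin_patternBelow, ← orderEmbOfFin_patternBelow, OrderEmbedding.lt_iff_lt]

def ofPatternImageFun (hj : j ≤ n) {B : Finset (Fin n)} (hB : #B = n - j)
    (τ : Perm (Fin j)) (p : Fin n) : Fin n :=
  if h : (p : ℕ) < j then Bᶜ.orderEmbOfFin (card_compl_of_card_eq_sub hj hB) (τ ⟨p, h⟩)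
  else B.orderEmbOfFin hB ⟨p - j, by omega⟩

lemma ofPatternImageFun_injective (hj : j ≤ n) {B : Finset (Fin n)} (hB : #B = n - j)
    (τ : Perm (Fin j)) : Function.Injective (ofPatternImageFun hj hB τ) := by
  have disjoint :
      ∀ x y, Bᶜ.orderEmbOfFin (card_compl_of_card_eq_sub hj hB) x ≠ B.orderEmbOfFin hB y :=
    fun x y hxy => mem_compl.mp (hxy ▸ orderEmbOfFin_mem _ _ x) (orderEmbOfFin_mem _ _ y)
  intro p q hpq
  unfold ofPatternImageFun at hpq
  split_ifs at hpq with hp hq hq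
  · simpa [Fin.ext_iff] using hpq
  · exact absurd hpq (disjoint _ _)
  · exact absurd hpq.symm (disjoint _ _)
  · simp only [OrderEmbedding.eq_iff_eq, Fin.mk.injEq] at hpq
    omega

noncomputable def ofPatternImage (hj : j ≤ n) {B : Finset (Fin n)} (hB : #B = n - j)
    (τ : Perm (Fin j)) : Perm (Fin n) :=
  Equiv.ofBijective _ (Finite.injective_iff_bijective.mp (ofPatternImageFun_injective hj hB τ))

lemma ofPatternImage_of_lt (hj : j ≤ n) {B : Finset (Fin n)} (hB : #B = n - j)
    (τ : Perm (Fin j)) {p : Fin n} (h : (p : ℕ) < j) :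
    ofPatternImage hj hB τ p = Bᶜ.orderEmbOfFin (card_compl_of_card_eq_sub hj hB) (τ ⟨p, h⟩) :=
  dif_pos h

lemma ofPatternImage_of_le (hj : j ≤ n) {B : Finset (Fin n)} (hB : #B = n - j)
    (τ : Perm (Fin j)) {p : Fin n} (h : j ≤ (p : ℕ)) :
    ofPatternImage hj hB τ p = B.orderEmbOfFin hB ⟨p - j, by omega⟩ :=
  dif_neg (not_lt.mpr h)

lemma strictMonoOn_ofPatternImage (hj : j ≤ n) {B : Finset (Fin n)} (hB : #B = n - j)
    (τ : Perm (Fin j)) : StrictMonoOn (ofPatternImage hj hB τ) {p | j ≤ (p : ℕ)} := by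
  intro p hp q hq hpq
  rw [ofPatternImage_of_le hj hB τ hp, ofPatternImage_of_le hj hB τ hq]
  exact (B.orderEmbOfFin hB).strictMono (Fin.mk_lt_mk.mpr (by simp at hp hq; omega))

lemma imageFrom_ofPatternImage (hj : j ≤ n) {B : Finset (Fin n)} (hB : #B = n - j)
    (τ : Perm (Fin j)) : imageFrom j (ofPatternImage hj hB τ) = B := by
  ext b
  rw [mem_imageFrom]
  constructor
  · rintro ⟨p, hp, rfl⟩
    rw [ofPatternImage_of_le hj hB τ hp]
    exact orderEmbOfFin_mem _ _ _
  · intro hb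
    obtain ⟨i, rfl⟩ : b ∈ Set.range (B.orderEmbOfFin hB) := by rwa [range_orderEmbOfFin]
    refine ⟨⟨j + i, by omega⟩, Nat.le_add_right _ _, ?_⟩
    rw [ofPatternImage_of_le hj hB τ (Nat.le_add_right _ _)]
    simp

lemma patternBelow_ofPatternImage (hj : j ≤ n) {B : Finset (Fin n)} (hB : #B = n - j)
    (τ : Perm (Fin j)) : patternBelow hj (ofPatternImage hj hB τ) = τ := by
  refine Perm.eq_of_lt_iff_lt fun x y => ?_
  rw [patternBelow_lt_patternBelow_iff, ofPatternImage_of_lt hj hB τ x.isLt,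
    ofPatternImage_of_lt hj hB τ y.isLt, OrderEmbedding.lt_iff_lt]
  rfl

lemma ofPatternImage_patternBelow (hj : j ≤ n) {σ : Perm (Fin n)}
    (hσ : StrictMonoOn σ {p | j ≤ (p : ℕ)}) :
    ofPatternImage hj (card_imageFrom σ) (patternBelow hj σ) = σ := by
  ext1 p
  by_cases h : (p : ℕ) < j
  · rw [ofPatternImage_of_lt hj _ _ h, orderEmbOfFin_patternBelow]
    rfl
  · rw [ofPatternImage_of_le hj _ _ (not_lt.mp h)]
    have : (fun i : Fin (n - j) => σ ⟨j + i, by omega⟩) =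
        (imageFrom j σ).orderEmbOfFin (card_imageFrom σ) :=
      orderEmbOfFin_unique _ (fun i => mem_imageFrom.mpr ⟨_, Nat.le_add_right _ _, rfl⟩)
        fun a b hab => hσ (Nat.le_add_right _ _) (Nat.le_add_right _ _) (by simpa using hab)
    rw [← this]
    exact congrArg σ (Fin.ext (by simp; omega))

noncomputable def splitEquiv (hj : j ≤ n) :
    {σ : Perm (Fin n) // StrictMonoOn σ {p | j ≤ (p : ℕ)}} ≃
      Perm (Fin j) × {B : Finset (Fin n) // #B = n - j} where
  toFun σ := (patternBelow hj σ, ⟨imageFrom j σ, card_imageFrom _⟩)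
  invFun x := ⟨ofPatternImage hj x.2.2 x.1, strictMonoOn_ofPatternImage hj x.2.2 x.1⟩
  left_inv σ := Subtype.ext (ofPatternImage_patternBelow hj σ.2)
  right_inv := by
    rintro ⟨τ, B, hB⟩
    ext1
    · exact patternBelow_ofPatternImage hj hB τ
    · exact Subtype.ext (imageFrom_ofPatternImage hj hB τ)

lemma card_strictMonoOn_split (hj : j ≤ n) (P : Perm (Fin j) → Prop)
    (Q : Finset (Fin n) → Prop) :
    Nat.card {σ : Perm (Fin n) //
        StrictMonoOn σ {p | j ≤ (p : ℕ)} ∧ P (patternBelow hj σ) ∧ Q (imageFrom j σ)} =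
      Nat.card {τ : Perm (Fin j) // P τ} * Nat.card {B : Finset (Fin n) // #B = n - j ∧ Q B} := by
  calc _ = Nat.card {x : Perm (Fin j) × {B : Finset (Fin n) // #B = n - j} //
        P x.1 ∧ Q x.2.1} :=
        Nat.card_congr <| (subtypeSubtypeEquivSubtypeInter _ _).symm.trans <|
          (splitEquiv hj).subtypeEquiv fun _ => Iff.rfl
    _ = Nat.card ({τ // P τ} × {B : {B : Finset (Fin n) // #B = n - j} // Q B}) :=
        Nat.card_congr <| subtypeProdEquivProd (p := P)
          (q := fun B : {B : Finset (Fin n) // #B = n - j} => Q B)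
    _ = _ := by rw [Nat.card_prod, Nat.card_congr (subtypeSubtypeEquivSubtypeInter _ _)]

lemma strictMonoOn_of_forall_notMem_descSet {σ : Perm (Fin n)}
    (h : ∀ p : Fin n, j ≤ (p : ℕ) → p ∉ descSet σ) : StrictMonoOn σ {p | j ≤ (p : ℕ)} := by
  have step : ∀ (p : Fin n) (hp : (p : ℕ) + 1 < n), j ≤ (p : ℕ) → σ p < σ ⟨p + 1, hp⟩ :=
    fun p hp hjp => (not_lt.mp fun hlt => h p hjp ((mem_descSet_iff σ p).mpr ⟨hp, hlt⟩)).lt_of_ne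
      (σ.injective.ne (Fin.ne_of_val_ne (by simp)))
  rintro p (hjp : j ≤ (p : ℕ)) ⟨q, hq⟩ - hpq
  change (p : ℕ) + 1 ≤ q at hpq
  induction q, hpq using Nat.le_induction with
  | base => exact step p hq hjp
  | succ q hpq' ih =>
    exact (ih (by omega)).trans (step ⟨q, by omega⟩ hq (show j ≤ q by omega))

lemma mem_descSet_patternBelow_iff (hj : j ≤ n) (σ : Perm (Fin n)) (p : Fin j) :
    p ∈ descSet (patternBelow hj σ) ↔ (p : ℕ) + 1 < j ∧ Fin.castLE hj p ∈ descSet σ := by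
  simp only [mem_descSet_iff, patternBelow_lt_patternBelow_iff]
  constructor
  · rintro ⟨h, hlt⟩
    exact ⟨h, by simp only [Fin.val_castLE]; omega, hlt⟩
  · rintro ⟨h, _, hlt⟩
    exact ⟨h, hlt⟩

lemma forall_descSet_mem_iff (hj : j ≤ n) {T : Set ℕ} (hjT : j ∈ T)
    (hT : ∀ x ∈ T, x < n → x ≤ j) (σ : Perm (Fin n)) :
    (∀ p ∈ descSet σ, (p : ℕ) + 1 ∈ T) ↔
      StrictMonoOn σ {p | j ≤ (p : ℕ)} ∧ ∀ p ∈ descSet (patternBelow hj σ), (p : ℕ) + 1 ∈ T := by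
  constructor
  · intro hσ
    refine ⟨strictMonoOn_of_forall_notMem_descSet fun p hjp hp => ?_, fun p hp => ?_⟩
    · have := hT _ (hσ p hp) ((mem_descSet_iff σ p).mp hp).1
      omega
    · exact hσ _ ((mem_descSet_patternBelow_iff hj σ p).mp hp).2
  · rintro ⟨hmono, hlow⟩ p hp
    obtain ⟨hpn, hlt⟩ := (mem_descSet_iff σ p).mp hp
    rcases lt_trichotomy ((p : ℕ) + 1) j with hpj | hpj | hpj
    · exact hlow ⟨p, by omega⟩ ((mem_descSet_patternBelow_iff hj σ _).mpr ⟨hpj, hp⟩)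
    · exact hpj ▸ hjT
    · exact absurd hlt (hmono (show j ≤ (p : ℕ) by omega) (show j ≤ (p : ℕ) + 1 by omega)
        (Fin.lt_def.mpr (Nat.lt_succ_self _))).asymm

lemma card_forall_descSet_mem_split (hj : j ≤ n) {T : Set ℕ} (hjT : j ∈ T)
    (hT : ∀ x ∈ T, x < n → x ≤ j) (Q : Finset (Fin n) → Prop) :
    Nat.card {σ : Perm (Fin n) // (∀ p ∈ descSet σ, (p : ℕ) + 1 ∈ T) ∧ Q (imageFrom j σ)} =
      Nat.card {τ : Perm (Fin j) // ∀ p ∈ descSet τ, (p : ℕ) + 1 ∈ T} *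
        Nat.card {B : Finset (Fin n) // #B = n - j ∧ Q B} := by
  rw [← card_strictMonoOn_split hj]
  exact Nat.card_congr <| subtypeEquivRight fun σ => by
    rw [forall_descSet_mem_iff hj hjT hT, and_assoc]

end Split

lemma card_forall_descSet_mem_range :
    ∀ {k : ℕ} {s : Fin (k + 1) → ℕ}, StrictMono s →
      Nat.card {σ : Perm (Fin (s (Fin.last k))) //
          ∀ p ∈ descSet σ, (p : ℕ) + 1 ∈ Set.range s} =
        ∏ m : Fin k, (s m.succ).choose (s m.castSucc)
  | 0, s, _ => by
    have eq_one : ∀ σ : Perm (Fin (s 0)), (∀ p ∈ descSet σ, (p : ℕ) + 1 ∈ Set.range s) → σ = 1 :=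
      fun σ hσ => Perm.eq_one_of_strictMono fun p q hpq =>
        strictMonoOn_of_forall_notMem_descSet (j := 0) (fun p _ hp => by
          obtain ⟨a, ha⟩ := hσ p hp
          have := ((mem_descSet_iff σ p).mp hp).1
          rw [Fin.fin_one_eq_zero a] at ha
          omega) (Nat.zero_le _) (Nat.zero_le _) hpq
    have one_mem : ∀ p ∈ descSet (1 : Perm (Fin (s 0))), (p : ℕ) + 1 ∈ Set.range s :=
      fun p hp => by simp [mem_descSet_iff, Fin.lt_def] at hp
    rw [Finset.univ_eq_empty, prod_empty, Nat.card_eq_one_iff_unique]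
    exact ⟨⟨fun σ τ => Subtype.ext ((eq_one σ.1 σ.2).trans (eq_one τ.1 τ.2).symm)⟩, ⟨⟨1, one_mem⟩⟩⟩
  | k + 1, s, hs => by
    set j := s (Fin.last k).castSucc
    have hjn : j < s (Fin.last (k + 1)) := hs (Fin.castSucc_lt_last _)
    have hT : ∀ x ∈ Set.range s, x < s (Fin.last (k + 1)) → x ≤ j := by
      rintro _ ⟨a, rfl⟩ hx
      induction a using Fin.lastCases with
      | last => exact absurd hx (lt_irrefl _)
      | cast b => exact hs.monotone (Fin.castSucc_le_castSucc_iff.mpr (Fin.le_last b))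
    have low : ∀ (τ : Perm (Fin j)), (∀ p ∈ descSet τ, (p : ℕ) + 1 ∈ Set.range s) ↔
        ∀ p ∈ descSet τ, (p : ℕ) + 1 ∈ Set.range (s ∘ Fin.castSucc) := fun τ =>
      forall₂_congr fun p hp => by
        have : (p : ℕ) + 1 < j := ((mem_descSet_iff τ p).mp hp).1
        simp only [Set.mem_range, Fin.exists_fin_succ', Function.comp_apply]
        exact or_iff_left (by omega)
    have split := card_forall_descSet_mem_split hjn.le (Set.mem_range_self _) hT fun _ => True
    simp only [and_true] at split
    have ih : Nat.card {τ : Perm (Fin j) //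
        ∀ p ∈ descSet τ, (p : ℕ) + 1 ∈ Set.range (s ∘ Fin.castSucc)} =
          ∏ m : Fin k, (s m.succ.castSucc).choose (s m.castSucc.castSucc) :=
      card_forall_descSet_mem_range (hs.comp Fin.strictMono_castSucc)
    rw [split, Nat.card_congr (subtypeEquivRight low), ih, Fin.prod_univ_castSucc]
    simp only [Fin.succ_castSucc, Fin.succ_last]
    rw [Nat.card_eq_fintype_card, Fintype.card_finset_len, Fintype.card_fin, Nat.choose_symm hjn.le]

lemma isGreatest_imageFrom {m j : ℕ} {σ : Perm (Fin (m + 1))} (hj : j ≤ m)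
    (hσ : StrictMonoOn σ {p | j ≤ (p : ℕ)}) :
    IsGreatest (imageFrom j σ : Set (Fin (m + 1))) (σ (Fin.last m)) := by
  refine ⟨mem_imageFrom.mpr ⟨_, hj, rfl⟩, ?_⟩
  rintro _ hx
  obtain ⟨p, hp, rfl⟩ := mem_imageFrom.mp hx
  exact hσ.monotoneOn hp hj (Fin.le_last p)

lemma card_isGreatest {m : ℕ} (v : Fin m) (c : ℕ) :
    Nat.card {B : Finset (Fin m) // #B = c + 1 ∧ IsGreatest (B : Set (Fin m)) v} =
      (v : ℕ).choose c := by
  classical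
  rw [Nat.card_eq_fintype_card, Fintype.card_subtype, ← Fin.card_Iio v, ← card_powersetCard]
  refine card_nbij' (·.erase v) (insert v) ?_ ?_ ?_ ?_
  · intro B hB
    simp only [coe_filter, Set.mem_ofPred_eq, mem_univ, true_and] at hB
    simp only [mem_coe, mem_powersetCard]
    obtain ⟨hcard, hv, hmax⟩ := hB
    refine ⟨fun x hx => mem_Iio.mpr ?_, by rw [card_erase_of_mem hv, hcard, Nat.add_sub_cancel]⟩
    exact (hmax (mem_of_mem_erase hx)).lt_of_ne (ne_of_mem_erase hx)
  · intro C hC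
    simp only [mem_coe, mem_powersetCard] at hC
    simp only [coe_filter, Set.mem_ofPred_eq, mem_univ, true_and]
    have hv : v ∉ C := fun h => lt_irrefl v (mem_Iio.mp (hC.1 h))
    refine ⟨by rw [card_insert_of_notMem hv, hC.2], mem_insert_self v C, fun x hx => ?_⟩
    rcases mem_insert.mp hx with rfl | hx
    exacts [le_rfl, (mem_Iio.mp (hC.1 hx)).le]
  · intro B hB
    simp only [coe_filter, Set.mem_ofPred_eq, mem_univ, true_and] at hB
    exact insert_erase (hB.2.1)
  · intro C hC
    simp only [mem_coe, mem_powersetCard] at hC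
    exact erase_insert fun h => (lt_irrefl v) (mem_Iio.mp (hC.1 h))

theorem descents_in_S_count_general (d k r : ℕ) (hr : r ≤ d)
    (s : Fin (k + 1) → ℕ) (hmono : StrictMono s)
    (hs : ∀ m, 1 ≤ s m ∧ s m ≤ d) :
    Nat.card {σ : Equiv.Perm (Fin (d + 1)) //
        (∀ p : Fin (d + 1), p ∈ descSet σ → ∃ a : Fin (k + 1), s a = (p : ℕ) + 1) ∧
        ∀ q : Fin (d + 1), (q : ℕ) = d → (σ q : ℕ) + 1 + r = d + 1} =
      (∏ m : Fin k, (s m.succ).choose (s m.castSucc)) *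
        ((d - r).choose (d - s (Fin.last k))) := by
  have hj : s (Fin.last k) ≤ d := (hs _).2
  have hT : ∀ x ∈ Set.range s, x < d + 1 → x ≤ s (Fin.last k) := by
    rintro _ ⟨a, rfl⟩ -
    exact hmono.monotone (Fin.le_last a)
  let v : Fin (d + 1) := ⟨d - r, by omega⟩
  have last_eq_iff : ∀ σ : Perm (Fin (d + 1)),
      (∀ q : Fin (d + 1), (q : ℕ) = d → (σ q : ℕ) + 1 + r = d + 1) ↔ σ (Fin.last d) = v :=
    fun σ => ⟨fun h => Fin.ext (by have := h (Fin.last d) rfl; simp [v]; omega),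
      fun h q hq => by rw [show q = Fin.last d from Fin.ext hq, h]; simp [v]; omega⟩
  calc _ = Nat.card {σ : Perm (Fin (d + 1)) // (∀ p ∈ descSet σ, (p : ℕ) + 1 ∈ Set.range s) ∧
        IsGreatest (imageFrom (s (Fin.last k)) σ : Set (Fin (d + 1))) v} :=
      Nat.card_congr <| subtypeEquivRight fun σ => and_congr_right fun hσ => by
        have hmax := isGreatest_imageFrom hj
          ((forall_descSet_mem_iff (by omega) (Set.mem_range_self _) hT σ).mp hσ).1
        rw [last_eq_iff]
        exact ⟨fun h => h ▸ hmax, hmax.unique⟩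
    _ = _ := (card_forall_descSet_mem_split (by omega) (Set.mem_range_self _) hT _).trans <| by
      rw [card_forall_descSet_mem_range hmono,
        show d + 1 - s (Fin.last k) = d - s (Fin.last k) + 1 by omega, card_isGreatest v]

/-- For `d ≥ 1`, a subset `S = {s_0 < s_1 < … < s_k} ⊆ {1,…,d}` (with `k+1`
elements, given as a strictly increasing list `s`), and `0 ≤ r ≤ d`, the number
of permutations `σ ∈ S_{d+1}` with descent set contained in `S` and
`σ(d+1) = d+1-r` equals the multinomial coefficient
`binom(s_k; s_k-s_{k-1}, …, s_1-s_0, s_0)`, written as the telescoping product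
`∏_m binom(s_{m+1}, s_m)`, times `binom(d-r, d-s_k)`. -/
theorem descents_in_S_count (d k r : ℕ) (hd : 1 ≤ d) (hr : r ≤ d)
    (s : Fin (k + 1) → ℕ) (hmono : StrictMono s)
    (hs : ∀ m, 1 ≤ s m ∧ s m ≤ d) :
    Nat.card {σ : Equiv.Perm (Fin (d + 1)) //
        (∀ p : Fin (d + 1), p ∈ descSet σ → ∃ a : Fin (k + 1), s a = (p : ℕ) + 1) ∧
        ∀ q : Fin (d + 1), (q : ℕ) = d → (σ q : ℕ) + 1 + r = d + 1} =
      (∏ m : Fin k, (s m.succ).choose (s m.castSucc)) *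
        ((d - r).choose (d - s (Fin.last k))) :=
  descents_in_S_count_general d k r hr s hmono hs
end

section
/- For d ≥ 1, 0 ≤ k ≤ d, and 0 ≤ r ≤ d, the number of pairs (S, σ) with S a k-subset of {1,...,d}, σ ∈ S_{d+1}, D(σ) ⊆ S, and σ(d+1) = d+1-r equals Σ_{j=k}^{d} binom(d-r, d-j) · S(j,k) · k!. -/
open Finset

/-- The Stirling numbers of the second kind `S(n,k)`. -/
def stirling : ℕ → ℕ → ℕ
  | 0, 0 => 1
  | 0, _ + 1 => 0
  | _ + 1, 0 => 0
  | n + 1, k + 1 => (k + 1) * stirling n (k + 1) + stirling n k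

/-!
Cutting the positions `0, …, d` after each element of `S` splits them into `k + 1` consecutive
nonempty blocks, and `D(σ) ⊆ S` says exactly that `σ` increases on every block. Recording for
each value the block it sits in turns such a pair `(S, σ)` into a surjection
`g : Fin (d + 1) → Fin (k + 1)`; conversely `σ` lists the values by increasing `(g v, v)`. Under
this bijection `σ(d+1)` is the largest value with `g v = k`, so the pairs with `σ(d+1) = d + 1 - r`
correspond to surjections whose top fibre `T` has maximum `d - r`. Choosing `T` minus its maximum
among the `d - r` smaller values, and a surjection of the remaining values onto `Fin k`, gives
`∑ₘ binom(d-r, m) S(d-m, k) k!`.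
-/

open Function

theorem stirling_eq_stirlingSecond : stirling = Nat.stirlingSecond := by
  funext n k
  induction n generalizing k with
  | zero => cases k <;> rfl
  | succ n ih => cases k <;> simp [stirling, Nat.stirlingSecond_succ_succ, ih]

theorem Fin.surjective_cons_iff {n : ℕ} {β : Type*} (c : β) (g : Fin n → β) :
    Surjective (Fin.cons c g : Fin (n + 1) → β) ↔ ∀ b ≠ c, ∃ i, g i = b := by
  simp only [Surjective, Fin.exists_fin_succ, Fin.cons_zero, Fin.cons_succ, ne_eq]
  exact forall_congr' fun b => by rw [eq_comm, or_iff_not_imp_left]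

theorem Nat.card_surjOn_compl_singleton {α β : Type*} [Finite α] [Finite β] (c : β) :
    Nat.card {g : α → β // ∀ b ≠ c, ∃ a, g a = b} =
      Nat.card {g : α → β // Surjective g} + Nat.card {g : α → {b // b ≠ c} // Surjective g} := by
  classical
  rw [← Nat.card_congr (Equiv.sumCompl fun g : {g : α → β // ∀ b ≠ c, ∃ a, g a = b} =>
    ∃ a, g.1 a = c), Nat.card_sum]
  congr 1
  · refine Nat.card_congr ((Equiv.subtypeSubtypeEquivSubtypeInter
      (fun g : α → β => ∀ b ≠ c, ∃ a, g a = b) (fun g => ∃ a, g a = c)).trans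
      (Equiv.subtypeEquivRight fun g => ⟨fun h b => ?_, fun h => ⟨fun b _ => h b, h c⟩⟩))
    obtain rfl | hb := eq_or_ne b c
    exacts [h.2, h.1 b hb]
  · exact Nat.card_congr
      { toFun := fun g => ⟨fun a => ⟨g.1.1 a, fun h => g.2 ⟨a, h⟩⟩,
          fun b => (g.1.2 b b.2).imp fun a h => Subtype.ext h⟩
        invFun := fun h => ⟨⟨Subtype.val ∘ h.1,
          fun b hb => (h.2 ⟨b, hb⟩).imp fun a h => congrArg Subtype.val h⟩,
          fun ⟨a, ha⟩ => (h.1 a).2 ha⟩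
        left_inv := fun g => rfl
        right_inv := fun h => rfl }

theorem Nat.card_surjective_fin (n : ℕ) (β : Type*) [Finite β] :
    Nat.card {f : Fin n → β // Surjective f} =
      n.stirlingSecond (Nat.card β) * (Nat.card β).factorial := by
  induction n generalizing β with
  | zero =>
    cases isEmpty_or_nonempty β with
    | inl hβ =>
      have : Unique {f : Fin 0 → β // Surjective f} :=
        ⟨⟨⟨finZeroElim, isEmptyElim⟩⟩, fun f => Subtype.ext (funext finZeroElim)⟩
      simp
    | inr hβ =>
      have : IsEmpty {f : Fin 0 → β // Surjective f} :=
        ⟨fun f => (f.2 (Classical.arbitrary β)).choose.elim0⟩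
      obtain ⟨m, hm⟩ := Nat.exists_eq_succ_of_ne_zero (Nat.card_ne_zero.2 ⟨hβ, inferInstance⟩)
      simp [hm]
  | succ n ih =>
    classical
    have : Fintype β := Fintype.ofFinite β
    have hne (c : β) : Nat.card {b // b ≠ c} = Nat.card β - 1 := by
      rw [← Nat.card_congr (Equiv.optionSubtypeNe c), Finite.card_option, Nat.add_sub_cancel]
    have hcons : Nat.card {f : Fin (n + 1) → β // Surjective f} =
        ∑ c : β, Nat.card {g : Fin n → β // Surjective (Fin.cons c g : Fin (n + 1) → β)} := by
      rw [← Nat.card_sigma]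
      exact Nat.card_congr
        ((Equiv.subtypeEquiv (Fin.consEquiv fun _ => β) fun _ => Iff.rfl).symm.trans
        (Equiv.subtypeProdEquivSigmaSubtype fun c g => Surjective (Fin.cons c g : Fin (n + 1) → β)))
    simp_rw [hcons, Fin.surjective_cons_iff, Nat.card_surjOn_compl_singleton, ih, hne, sum_const]
    rw [Finset.card_univ, ← Nat.card_eq_fintype_card, smul_eq_mul]
    rcases Nat.card β with _ | m
    · simp
    · simp [Nat.stirlingSecond_succ_succ, Nat.factorial_succ]
      ring

theorem Nat.card_surjective (α β : Type*) [Finite α] [Finite β] :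
    Nat.card {f : α → β // Surjective f} =
      (Nat.card α).stirlingSecond (Nat.card β) * (Nat.card β).factorial := by
  rw [← Nat.card_surjective_fin]
  exact Nat.card_congr (Equiv.subtypeEquiv ((Finite.equivFin α).arrowCongr (Equiv.refl β))
    fun f => (EquivLike.surjective_comp (Finite.equivFin α).symm f).symm)

theorem Nat.card_surjective_preimage_last {α : Type*} {k : ℕ} (T : Finset α) (hT : T.Nonempty) :
    Nat.card {g : α → Fin (k + 1) // Surjective g ∧ ∀ a, g a = Fin.last k ↔ a ∈ T} =
      Nat.card {g : {a // a ∉ T} → Fin k // Surjective g} := by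
  classical
  refine Nat.card_congr
    { toFun := fun g => ⟨fun x => (g.1 x).castPred fun h => x.2 ((g.2.2 x).1 h), fun c => ?_⟩
      invFun := fun h => ⟨fun a => if ha : a ∈ T then Fin.last k else (h.1 ⟨a, ha⟩).castSucc,
        fun c => ?_, fun a => ?_⟩
      left_inv := fun g => ?_
      right_inv := fun h => ?_ }
  · obtain ⟨a, ha⟩ := g.2.1 c.castSucc
    have haT : a ∉ T := fun h => Fin.castSucc_ne_last c (ha ▸ (g.2.2 a).2 h)
    exact ⟨⟨a, haT⟩, by simp [ha]⟩
  · induction c using Fin.lastCases with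
    | last => exact ⟨hT.choose, by simp [hT.choose_spec]⟩
    | cast c =>
      obtain ⟨x, hx⟩ := h.2 c
      exact ⟨x, by simp [x.2, hx]⟩
  · by_cases ha : a ∈ T <;> simp [ha, Fin.castSucc_ne_last]
  · ext1; funext a
    by_cases ha : a ∈ T
    · simp [ha, (g.2.2 a).2 ha]
    · simp [ha]
  · ext1; funext x
    simp [x.2]

theorem Finset.isGreatest_coe_iff {α : Type*} [LinearOrder α] [LocallyFiniteOrderBot α]
    {s : Finset α} {a : α} :
    IsGreatest (s : Set α) a ↔ s.erase a ⊆ Iio a ∧ s = insert a (s.erase a) := by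
  refine ⟨fun h => ⟨fun b hb => mem_Iio.2 ((h.2 (mem_of_mem_erase hb)).lt_of_ne
    (ne_of_mem_erase hb)), (insert_erase h.1).symm⟩, fun ⟨h, hs⟩ => ⟨?_, fun b hb => ?_⟩⟩
  · rw [mem_coe, hs]; exact mem_insert_self a _
  · obtain rfl | hba := eq_or_ne b a
    exacts [le_rfl, (mem_Iio.1 (h (mem_erase.2 ⟨hba, hb⟩))).le]

theorem Finset.isGreatest_coe_and_erase_eq_iff {α : Type*} [LinearOrder α]
    [LocallyFiniteOrderBot α] {s B : Finset α} {a : α} (hB : B ⊆ Iio a) :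
    IsGreatest (s : Set α) a ∧ s.erase a = B ↔ s = insert a B := by
  have ha : a ∉ B := fun h => lt_irrefl a (mem_Iio.1 (hB h))
  rw [isGreatest_coe_iff]
  constructor
  · rintro ⟨⟨-, h⟩, rfl⟩; exact h
  · rintro rfl; rw [erase_insert ha]; exact ⟨⟨hB, rfl⟩, rfl⟩

theorem Nat.card_surjective_isGreatest_preimage_last {n k : ℕ} (v₀ : Fin (n + 1)) :
    Nat.card {g : Fin (n + 1) → Fin (k + 1) //
        Surjective g ∧ IsGreatest {v | g v = Fin.last k} v₀} =
      ∑ m ∈ range (v₀ + 1), (v₀ : ℕ).choose m * ((n - m).stirlingSecond k * k.factorial) := by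
  classical
  let top (g : Fin (n + 1) → Fin (k + 1)) : Finset (Fin (n + 1)) := {v | g v = Fin.last k}
  have htop (g : Fin (n + 1) → Fin (k + 1)) : {v | g v = Fin.last k} = (top g : Set _) := by
    ext; simp [top]
  rw [Nat.card_eq_fintype_card, Fintype.card_subtype, card_eq_sum_card_fiberwise
    (f := fun g => (top g).erase v₀) (t := (Iio v₀).powerset) fun g hg => ?_]
  · rw [← Fin.card_Iio]
    simp only [← smul_eq_mul (a := Nat.choose _ _)]
    rw [← sum_powerset_apply_card (fun m => (n - m).stirlingSecond k * k.factorial)]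
    refine sum_congr rfl fun B hB => ?_
    replace hB : B ⊆ Iio v₀ := mem_powerset.1 hB
    have hfiber (g : Fin (n + 1) → Fin (k + 1)) :
        ((Surjective g ∧ IsGreatest {v | g v = Fin.last k} v₀) ∧ (top g).erase v₀ = B) ↔
          Surjective g ∧ ∀ v, g v = Fin.last k ↔ v ∈ insert v₀ B := by
      rw [and_assoc, htop, isGreatest_coe_and_erase_eq_iff hB, Finset.ext_iff]
      simp [top]
    have hcompl : Nat.card {v // v ∉ insert v₀ B} = n - #B := by
      rw [Nat.card_eq_fintype_card, Fintype.card_subtype_compl, Fintype.card_coe,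
        card_insert_of_notMem fun h => lt_irrefl _ (mem_Iio.1 (hB h)), Fintype.card_fin,
        Nat.add_sub_add_right]
    rw [filter_filter, ← Fintype.card_subtype, ← Nat.card_eq_fintype_card,
      Nat.card_congr (Equiv.subtypeEquivRight hfiber),
      Nat.card_surjective_preimage_last _ (insert_nonempty _ _), Nat.card_surjective, hcompl,
      Nat.card_fin]
  · rw [coe_powerset, Set.mem_preimage, Set.mem_powerset_iff, coe_subset]
    exact (isGreatest_coe_iff.1 (htop g ▸ (mem_filter.1 hg).2.2)).1

theorem sum_range_choose_mul_sub {v n : ℕ} (h : v ≤ n) (f : ℕ → ℕ) :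
    ∑ m ∈ range (v + 1), v.choose m * f (n - m) = ∑ j ∈ range (n + 1), v.choose (n - j) * f j := by
  conv_rhs => rw [← sum_range_reflect]
  refine sum_subset (range_subset_range.2 (by omega)) (fun m _ hmv => ?_) |>.trans
    (sum_congr rfl fun m hm => ?_)
  · rw [Nat.choose_eq_zero_of_lt (by simpa using hmv), zero_mul]
  · rw [mem_range] at hm
    rw [show n + 1 - 1 - m = n - m by omega, show n - (n - m) = m by omega]

theorem sum_range_choose_mul_stirlingSecond {d k v : ℕ} (hv : v ≤ d) :
    ∑ m ∈ range (v + 1), v.choose m * ((d - m).stirlingSecond k * k.factorial) =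
      ∑ j ∈ Icc k d, v.choose (d - j) * stirling j k * k.factorial := by
  refine (sum_range_choose_mul_sub hv fun j => j.stirlingSecond k * k.factorial).trans ?_
  rw [stirling_eq_stirlingSecond]
  refine ((sum_subset (fun j hj => ?_) fun j hj hjk => ?_).trans
    (sum_congr rfl fun _ _ => mul_assoc _ _ _)).symm
  · simp only [mem_Icc, mem_range] at hj ⊢
    omega
  · simp only [mem_Icc, mem_range, not_and, not_le] at hj hjk
    rw [Nat.stirlingSecond_eq_zero_of_lt (by by_contra! h; exact absurd (hjk h) (by omega)),
      mul_zero, zero_mul]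

section LexSort

variable {n : ℕ} {α β : Type*}

theorem injective_toLex_apply_self [LinearOrder β] (g : Fin n → β) :
    Injective fun v => toLex (g v, v) :=
  fun _ _ h => (Prod.ext_iff.1 (toLex.injective h)).2

def lexSort [LinearOrder β] (g : Fin n → β) : Equiv.Perm (Fin n) :=
  Tuple.sort fun v => toLex (g v, v)

theorem strictMono_lexSort [LinearOrder β] (g : Fin n → β) :
    StrictMono fun i => toLex (g (lexSort g i), lexSort g i) :=
  (Tuple.monotone_sort _).strictMono_of_injective
    ((injective_toLex_apply_self g).comp (lexSort g).injective)

theorem lexSort_eq_of_strictMono [LinearOrder β] {g : Fin n → β} {σ : Equiv.Perm (Fin n)}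
    (h : StrictMono fun i => toLex (g (σ i), σ i)) : lexSort g = σ :=
  Equiv.ext fun i => injective_toLex_apply_self g
    (congrFun (Tuple.unique_monotone (f := fun v => toLex (g v, v)) (Tuple.monotone_sort _)
      h.monotone) i)

theorem monotone_of_strictMono_toLex [Preorder α] [Preorder β] {b : Fin n → α} {σ : Fin n → β}
    (h : StrictMono fun i => toLex (b i, σ i)) : Monotone b :=
  fun _ _ hij => Prod.Lex.monotone_fst _ _ (h.monotone hij)

theorem monotone_comp_lexSort [LinearOrder β] (g : Fin n → β) : Monotone (g ∘ lexSort g) :=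
  monotone_of_strictMono_toLex (strictMono_lexSort g)

theorem strictMono_toLex_iff [PartialOrder α] [Preorder β] {b : Fin (n + 1) → α}
    {σ : Fin (n + 1) → β} (hb : Monotone b) :
    StrictMono (fun i => toLex (b i, σ i)) ↔
      ∀ i : Fin n, b i.castSucc = b i.succ → σ i.castSucc < σ i.succ := by
  rw [Fin.strictMono_iff_lt_succ]
  refine forall_congr' fun i => ?_
  rw [Prod.Lex.toLex_lt_toLex, (hb (Fin.castSucc_le_succ i)).lt_iff_ne]
  by_cases h : b i.castSucc = b i.succ <;> simp [h]

theorem isGreatest_of_strictMono_toLex [Preorder α] {b : Fin (n + 1) → α}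
    {σ : Equiv.Perm (Fin (n + 1))} (h : StrictMono fun i => toLex (b i, σ i)) :
    IsGreatest {v | b (σ.symm v) = b (Fin.last n)} (σ (Fin.last n)) := by
  refine ⟨by simp, fun v hv => ?_⟩
  have hle := Prod.Lex.toLex_le_toLex.1 (h.monotone (Fin.le_last (σ.symm v)))
  simpa [show b (σ.symm v) = b (Fin.last n) from hv] using hle

theorem isGreatest_lexSort_last [LinearOrder β] (g : Fin (n + 1) → β) :
    IsGreatest {v | g v = g (lexSort g (Fin.last n))} (lexSort g (Fin.last n)) := by
  simpa using isGreatest_of_strictMono_toLex (strictMono_lexSort g)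

end LexSort

section BlockIndex

variable {d k : ℕ}

def blockIndex (S : Finset (Fin d)) (i : Fin (d + 1)) : ℕ := #{s ∈ S | s.castSucc < i}

theorem blockIndex_zero (S : Finset (Fin d)) : blockIndex S 0 = 0 := by
  simp [blockIndex]

theorem blockIndex_last (S : Finset (Fin d)) : blockIndex S (Fin.last d) = #S := by
  simp [blockIndex, Fin.castSucc_lt_last]

theorem blockIndex_succ (S : Finset (Fin d)) (i : Fin d) :
    blockIndex S i.succ = blockIndex S i.castSucc + if i ∈ S then 1 else 0 := by
  classical
  simp only [blockIndex, Fin.castSucc_lt_succ_iff, Fin.castSucc_lt_castSucc_iff, le_iff_lt_or_eq,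
    filter_or, filter_eq']
  split_ifs with hi
  · rw [union_singleton, card_insert_of_notMem (by simp)]
  · rw [union_empty, add_zero]

theorem blockIndex_monotone (S : Finset (Fin d)) : Monotone (blockIndex S) :=
  fun _ _ hij => card_le_card (monotone_filter_right S fun _ _ h => h.trans_le hij)

theorem blockIndex_le_card (S : Finset (Fin d)) (i : Fin (d + 1)) : blockIndex S i ≤ #S :=
  card_filter_le _ _

theorem blockIndex_castSucc_eq_succ_iff {S : Finset (Fin d)} {i : Fin d} :
    blockIndex S i.castSucc = blockIndex S i.succ ↔ i ∉ S := by
  rw [blockIndex_succ]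
  split_ifs with hi <;> simp [hi]

theorem eq_blockIndex_of_succ {S : Finset (Fin d)} {b : Fin (d + 1) → ℕ} (h₀ : b 0 = 0)
    (hsucc : ∀ i : Fin d, b i.succ = b i.castSucc + if i ∈ S then 1 else 0) :
    b = blockIndex S := by
  funext i
  induction i using Fin.induction with
  | zero => rw [h₀, blockIndex_zero]
  | succ i ih => rw [hsucc, blockIndex_succ, ih]

theorem exists_blockIndex_eq (S : Finset (Fin d)) {c : ℕ} (hc : c ≤ #S) :
    ∃ i, blockIndex S i = c := by
  suffices ∀ i, c ≤ blockIndex S i → ∃ j, blockIndex S j = c from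
    this (Fin.last d) (by rwa [blockIndex_last])
  intro i
  induction i using Fin.induction with
  | zero => exact fun h => ⟨0, by rw [blockIndex_zero] at h ⊢; omega⟩
  | succ i ih =>
    intro h
    by_cases hci : c ≤ blockIndex S i.castSucc
    · exact ih hci
    · refine ⟨i.succ, ?_⟩
      rw [blockIndex_succ] at h ⊢
      split_ifs at h ⊢ <;> omega

def blockFun (S : Finset (Fin d)) (hS : #S = k) (i : Fin (d + 1)) : Fin (k + 1) :=
  ⟨blockIndex S i, hS ▸ Nat.lt_succ_of_le (blockIndex_le_card S i)⟩

theorem blockFun_monotone (S : Finset (Fin d)) (hS : #S = k) : Monotone (blockFun S hS) :=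
  fun _ _ hij => Fin.mk_le_mk.2 (blockIndex_monotone S hij)

theorem blockFun_surjective (S : Finset (Fin d)) (hS : #S = k) : Surjective (blockFun S hS) :=
  fun c => (exists_blockIndex_eq S (by have := c.2; omega)).imp fun _ h => Fin.ext h

theorem blockFun_castSucc_eq_succ_iff {S : Finset (Fin d)} (hS : #S = k) {i : Fin d} :
    blockFun S hS i.castSucc = blockFun S hS i.succ ↔ i ∉ S :=
  Fin.mk.injEq .. ▸ blockIndex_castSucc_eq_succ_iff

theorem blockFun_last (S : Finset (Fin d)) (hS : #S = k) :
    blockFun S hS (Fin.last d) = Fin.last k :=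
  Fin.ext (by simp [blockFun, blockIndex_last, hS])

def jumps {α : Type*} [DecidableEq α] (b : Fin (d + 1) → α) : Finset (Fin d) :=
  {i | b i.castSucc ≠ b i.succ}

section MonotoneSurjective

variable {b : Fin (d + 1) → Fin (k + 1)}

theorem Fin.apply_zero_of_monotone_surjective (hmono : Monotone b) (hsurj : Surjective b) :
    b 0 = 0 := by
  obtain ⟨v, hv⟩ := hsurj 0
  exact le_antisymm (hv ▸ hmono (Fin.zero_le v)) (Fin.zero_le _)

theorem Fin.apply_last_of_monotone_surjective (hmono : Monotone b) (hsurj : Surjective b) :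
    b (Fin.last d) = Fin.last k := by
  obtain ⟨v, hv⟩ := hsurj (Fin.last k)
  exact le_antisymm (Fin.le_last _) (hv ▸ hmono (Fin.le_last v))

theorem Fin.apply_succ_le_of_monotone_surjective (hmono : Monotone b) (hsurj : Surjective b)
    (i : Fin d) : (b i.succ : ℕ) ≤ b i.castSucc + 1 := by
  by_contra! h
  obtain ⟨v, hv⟩ := hsurj ⟨b i.castSucc + 1, by omega⟩
  rcases le_or_gt v i.castSucc with hvi | hvi
  · have := Fin.le_def.1 (hv ▸ hmono hvi)
    dsimp only at this
    omega
  · have := Fin.le_def.1 (hv ▸ hmono (Fin.castSucc_lt_iff_succ_le.1 hvi))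
    dsimp only at this
    omega

theorem val_eq_blockIndex_jumps (hmono : Monotone b) (hsurj : Surjective b) :
    (fun i => (b i : ℕ)) = blockIndex (jumps b) := by
  refine eq_blockIndex_of_succ (by simp [Fin.apply_zero_of_monotone_surjective hmono hsurj])
    fun i => ?_
  have hle := Fin.le_def.1 (hmono (Fin.castSucc_le_succ i))
  have hstep := Fin.apply_succ_le_of_monotone_surjective hmono hsurj i
  by_cases hi : i ∈ jumps b
  · have : (b i.castSucc : ℕ) ≠ b i.succ := fun h => (mem_filter.1 hi).2 (Fin.ext h)
    rw [if_pos hi]; omega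
  · have : b i.castSucc = b i.succ := by simpa [jumps] using hi
    rw [if_neg hi, this, add_zero]

theorem card_jumps (hmono : Monotone b) (hsurj : Surjective b) : #(jumps b) = k := by
  rw [← blockIndex_last, ← congrFun (val_eq_blockIndex_jumps hmono hsurj),
    Fin.apply_last_of_monotone_surjective hmono hsurj, Fin.val_last]

theorem blockFun_jumps (hmono : Monotone b) (hsurj : Surjective b) :
    blockFun (jumps b) (card_jumps hmono hsurj) = b :=
  funext fun i => Fin.ext (congrFun (val_eq_blockIndex_jumps hmono hsurj) i).symm

end MonotoneSurjective

theorem jumps_blockFun (S : Finset (Fin d)) (hS : #S = k) : jumps (blockFun S hS) = S := by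
  ext i
  simp [jumps, blockFun_castSucc_eq_succ_iff]

end BlockIndex

section PairsEquiv

variable {d k : ℕ}

theorem lexSort_castSucc_lt_succ_of_notMem_jumps {β : Type*} [LinearOrder β] (g : Fin (d + 1) → β)
    {i : Fin d} (hi : i ∉ jumps (g ∘ lexSort g)) : lexSort g i.castSucc < lexSort g i.succ :=
  (strictMono_toLex_iff (monotone_comp_lexSort g)).1 (strictMono_lexSort g) i
    (by simpa [jumps] using hi)

theorem strictMono_toLex_blockFun_iff {S : Finset (Fin d)} (hS : #S = k)
    {σ : Equiv.Perm (Fin (d + 1))} :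
    StrictMono (fun i => toLex (blockFun S hS i, σ i)) ↔ ∀ i ∉ S, σ i.castSucc < σ i.succ := by
  simp only [strictMono_toLex_iff (blockFun_monotone S hS), blockFun_castSucc_eq_succ_iff]

def pairsEquivSurjective (v₀ : Fin (d + 1)) :
    {p : Finset (Fin d) × Equiv.Perm (Fin (d + 1)) //
      #p.1 = k ∧ (∀ i ∉ p.1, p.2 i.castSucc < p.2 i.succ) ∧ p.2 (Fin.last d) = v₀} ≃
    {g : Fin (d + 1) → Fin (k + 1) // Surjective g ∧ IsGreatest {v | g v = Fin.last k} v₀} where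
  toFun p := ⟨blockFun p.1.1 p.2.1 ∘ p.1.2.symm,
    (blockFun_surjective _ _).comp p.1.2.symm.surjective, by
      simpa [blockFun_last, p.2.2.2] using
        isGreatest_of_strictMono_toLex
          ((strictMono_toLex_blockFun_iff (σ := p.1.2) p.2.1).2 p.2.2.1)⟩
  invFun g := ⟨(jumps (g.1 ∘ lexSort g.1), lexSort g.1),
    card_jumps (monotone_comp_lexSort g.1) (g.2.1.comp (lexSort g.1).surjective),
    fun _ => lexSort_castSucc_lt_succ_of_notMem_jumps g.1,
    (isGreatest_lexSort_last g.1).unique (by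
      rw [← comp_apply (f := g.1), Fin.apply_last_of_monotone_surjective
        (monotone_comp_lexSort g.1) (g.2.1.comp (lexSort g.1).surjective)]
      exact g.2.2)⟩
  left_inv p := by
    obtain ⟨⟨S, σ⟩, hS, hasc, -⟩ := p
    have hσ : lexSort (blockFun S hS ∘ σ.symm) = σ :=
      lexSort_eq_of_strictMono (by simpa using (strictMono_toLex_blockFun_iff hS).2 hasc)
    ext1
    simp only [hσ, Prod.mk.injEq, and_true]
    rw [show (blockFun S hS ∘ σ.symm) ∘ σ = blockFun S hS by funext; simp, jumps_blockFun]
  right_inv g := by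
    ext1
    dsimp only
    rw [blockFun_jumps (monotone_comp_lexSort g.1) (g.2.1.comp (lexSort g.1).surjective)]
    funext v
    simp

end PairsEquiv

theorem forall_mem_descSet_iff {d : ℕ} {S : Finset (Fin d)} {σ : Equiv.Perm (Fin (d + 1))} :
    (∀ m ∈ descSet σ, ∃ x ∈ S, (x : ℕ) = m) ↔ ∀ i ∉ S, σ i.castSucc < σ i.succ := by
  simp only [descSet, mem_filter, mem_univ, true_and]
  constructor
  · intro h i hi
    by_contra! hle
    have hlt : σ i.succ < σ i.castSucc :=
      hle.lt_of_ne (σ.injective.ne Fin.castSucc_lt_succ.ne')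
    obtain ⟨x, hx, hxi⟩ := h i.castSucc ⟨i.succ, by simp, hlt⟩
    exact hi (Fin.ext hxi ▸ hx)
  · rintro h m ⟨m', hm', hlt⟩
    have hmd : (m : ℕ) < d := by omega
    refine ⟨⟨m, hmd⟩, ?_, rfl⟩
    by_contra hi
    have := h _ hi
    rw [show (Fin.castSucc ⟨m, hmd⟩ : Fin (d + 1)) = m from rfl,
      show (Fin.succ ⟨m, hmd⟩ : Fin (d + 1)) = m' from Fin.ext (by simp [hm'])] at this
    exact lt_asymm hlt this

theorem pairs_descents_count_general (d k r : ℕ) (hr : r ≤ d) :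
    Nat.card {p : Finset (Fin d) × Equiv.Perm (Fin (d + 1)) //
        p.1.card = k ∧
        (∀ m : Fin (d + 1), m ∈ descSet p.2 → ∃ x ∈ p.1, (x : ℕ) = (m : ℕ)) ∧
        ∀ q : Fin (d + 1), (q : ℕ) = d → (p.2 q : ℕ) + 1 + r = d + 1} =
      ∑ j ∈ Finset.Icc k d, (d - r).choose (d - j) * stirling j k * k.factorial := by
  let v₀ : Fin (d + 1) := ⟨d - r, by omega⟩
  have hlast (σ : Equiv.Perm (Fin (d + 1))) :
      (∀ q : Fin (d + 1), (q : ℕ) = d → (σ q : ℕ) + 1 + r = d + 1) ↔ σ (Fin.last d) = v₀ := by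
    refine ⟨fun h => Fin.ext ?_, fun h q hq => ?_⟩
    · have := h (Fin.last d) rfl
      simp only [v₀]
      omega
    · rw [show q = Fin.last d from Fin.ext hq, h]
      simp only [v₀]
      omega
  calc _ = Nat.card {p : Finset (Fin d) × Equiv.Perm (Fin (d + 1)) //
          #p.1 = k ∧ (∀ i ∉ p.1, p.2 i.castSucc < p.2 i.succ) ∧ p.2 (Fin.last d) = v₀} :=
        Nat.card_congr (Equiv.subtypeEquivRight fun p =>
          and_congr_right' (and_congr forall_mem_descSet_iff (hlast p.2)))
    _ = Nat.card {g : Fin (d + 1) → Fin (k + 1) //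
          Surjective g ∧ IsGreatest {v | g v = Fin.last k} v₀} :=
        Nat.card_congr (pairsEquivSurjective v₀)
    _ = ∑ m ∈ range (d - r + 1), (d - r).choose m * ((d - m).stirlingSecond k * k.factorial) :=
        Nat.card_surjective_isGreatest_preimage_last v₀
    _ = _ := sum_range_choose_mul_stirlingSecond (Nat.sub_le d r)

/-- For `d ≥ 1`, `0 ≤ k ≤ d`, `0 ≤ r ≤ d`, the number of pairs `(S,σ)` with `S`
a `k`-subset of `{1,…,d}` (encoded as a `k`-subset of `Fin d`, the element `x`
standing for the value `x+1`), `σ ∈ S_{d+1}`, `D(σ) ⊆ S` and `σ(d+1) = d+1-r`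
equals `Σ_{j=k}^{d} binom(d-r,d-j) · S(j,k) · k!`. -/
theorem pairs_descents_count (d k r : ℕ) (hd : 1 ≤ d) (hk : k ≤ d) (hr : r ≤ d) :
    Nat.card {p : Finset (Fin d) × Equiv.Perm (Fin (d + 1)) //
        p.1.card = k ∧
        (∀ m : Fin (d + 1), m ∈ descSet p.2 → ∃ x ∈ p.1, (x : ℕ) = (m : ℕ)) ∧
        ∀ q : Fin (d + 1), (q : ℕ) = d → (p.2 q : ℕ) + 1 + r = d + 1} =
      ∑ j ∈ Finset.Icc k d, (d - r).choose (d - j) * stirling j k * k.factorial :=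
  pairs_descents_count_general d k r hr
end

section
/- Let Δ be a (d-1)-dimensional simplicial complex with h_i ≥ 0 for all 0 ≤ i ≤ d. Then h_i^{sd(Δ)} ≥ h_i^Δ for all 0 ≤ i ≤ d. -/
open Finset

/-- `Δ` is an (abstract) simplicial complex: a collection of finite subsets of the
vertex set containing the empty face and closed under taking subsets. -/
def IsComplex {α : Type*} (Δ : Finset (Finset α)) : Prop :=
  ∅ ∈ Δ ∧ ∀ s ∈ Δ, ∀ t, t ⊆ s → t ∈ Δ

/-- `Δ` has dimension `d - 1`: every face has at most `d` vertices and some face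
has exactly `d` vertices. -/
def HasDim {α : Type*} (Δ : Finset (Finset α)) (d : ℕ) : Prop :=
  (∀ s ∈ Δ, s.card ≤ d) ∧ ∃ s ∈ Δ, s.card = d

/-- `fnum Δ i = f_{i-1}`, the number of faces of `Δ` with `i` vertices
(i.e. of dimension `i-1`). -/
def fnum {α : Type*} (Δ : Finset (Finset α)) (i : ℕ) : ℕ :=
  (Δ.filter (fun s => s.card = i)).card

/-- The entries of the `h`-vector of a `(d-1)`-dimensional complex:
`h_j = Σ_{i=0}^{j} (-1)^{j-i} binom(d-i, j-i) f_{i-1}`. -/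
def hnum {α : Type*} (Δ : Finset (Finset α)) (d j : ℕ) : ℤ :=
  ∑ i ∈ Finset.range (j + 1),
    (-1 : ℤ) ^ (j - i) * ((d - i).choose (j - i)) * (fnum Δ i : ℤ)

/-- The barycentric subdivision of `Δ`: the simplicial complex whose vertices are
the nonempty faces of `Δ` and whose faces are the chains of nonempty faces. -/
def sd {α : Type*} [DecidableEq α] (Δ : Finset (Finset α)) :
    Finset (Finset (Finset α)) :=
  (Δ.erase ∅).powerset.filter (fun c => ∀ s ∈ c, ∀ t ∈ c, s ⊆ t ∨ t ⊆ s)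

/-! Grouping the chains of `sd Δ` by their top face, a face with `k` vertices tops `chainCount k i`
chains with `i` elements, and `∑ᵢ binom(u, i) · chainCount k i = u ^ k`. Hence
`∑ᵢ f_{i-1}(sd Δ) binom(u, i) = ∑ₖ f_{k-1}(Δ) u ^ k = ∑ᵣ hᵣ(Δ) u ^ r (u + 1) ^ (d - r)`.
Since `h_j` is the coefficient of `x ^ j` in `(1 - x) ^ (d + 1) ∑ᵤ (∑ᵢ f_{i-1} binom(u, i)) x ^ u`,
this gives `h_j(sd Δ) = ∑ᵣ A(d + 1, j, r + 1) hᵣ(Δ)`, where `A(d + 1, j, r + 1)` is the coefficient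
of `x ^ j` in `(1 - x) ^ (d + 1) ∑ᵤ u ^ r (u + 1) ^ (d - r) x ^ u`. These numbers obey a recursion
with nonnegative coefficients, so they are nonnegative and `A(d + 1, j, j + 1) ≥ 1`; for `h(Δ) ≥ 0`
the diagonal term alone already gives `h_j(sd Δ) ≥ h_j(Δ)`. -/

open PowerSeries

theorem PowerSeries.coeff_one_sub_X_pow {R : Type*} [CommRing R] (m n : ℕ) :
    coeff n ((1 - X : R⟦X⟧) ^ m) = (-1) ^ n * m.choose n := by
  have hterm (k : ℕ) :
      (-X : R⟦X⟧) ^ k * (m.choose k : R⟦X⟧) = C ((-1 : R) ^ k * m.choose k) * X ^ k := by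
    simp only [map_mul, map_pow, map_neg, map_one, map_natCast, neg_pow X]
    ring
  rw [sub_eq_add_neg, add_comm, add_pow, map_sum]
  simp only [one_pow, mul_one, hterm, coeff_C_mul_X_pow, sum_ite_eq, mem_range]
  split_ifs with h
  · rfl
  · rw [Nat.choose_eq_zero_of_lt (by omega)]; simp

theorem PowerSeries.one_sub_X_pow_mul_mk_choose {R : Type*} [CommRing R] {i d : ℕ}
    (hid : i ≤ d) :
    (1 - X : R⟦X⟧) ^ (d + 1) * PowerSeries.mk (fun u => (u.choose i : R)) =
      X ^ i * (1 - X) ^ (d - i) := by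
  have hmk : PowerSeries.mk (fun u => (u.choose i : R)) =
      X ^ i * PowerSeries.mk (fun n => ((i + n).choose i : R)) := by
    ext n
    rw [coeff_X_pow_mul', coeff_mk, coeff_mk]
    split_ifs with h
    · rw [Nat.add_sub_cancel' h]
    · rw [Nat.choose_eq_zero_of_lt (by omega), Nat.cast_zero]
  rw [hmk, mul_left_comm, show d + 1 = (d - i) + (i + 1) by omega,
    ← invOneSubPow_val_succ_eq_mk_add_choose,
    one_sub_pow_add_mul_invOneSubPow_val_eq_one_sub_pow]

noncomputable def hTransform (d j : ℕ) (g : ℕ → ℤ) : ℤ :=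
  coeff j ((1 - X : ℤ⟦X⟧) ^ (d + 1) * PowerSeries.mk g)

lemma hTransform_sub (d j : ℕ) (f g : ℕ → ℤ) :
    hTransform d j (fun u => f u - g u) = hTransform d j f - hTransform d j g := by
  have : PowerSeries.mk (fun u => f u - g u) = PowerSeries.mk f - PowerSeries.mk g := by
    ext; simp
  rw [hTransform, this, mul_sub, map_sub, hTransform, hTransform]

lemma hTransform_sum {ι : Type*} (d j : ℕ) (s : Finset ι) (g : ι → ℕ → ℤ) :
    hTransform d j (fun u => ∑ t ∈ s, g t u) = ∑ t ∈ s, hTransform d j (g t) := by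
  have : PowerSeries.mk (fun u => ∑ t ∈ s, g t u) = ∑ t ∈ s, PowerSeries.mk (g t) := by
    ext; simp only [coeff_mk, map_sum]
  simp only [hTransform, this, mul_sum, map_sum]

lemma hTransform_const_mul (d j : ℕ) (c : ℤ) (g : ℕ → ℤ) :
    hTransform d j (fun u => c * g u) = c * hTransform d j g := by
  have : PowerSeries.mk (fun u => c * g u) = C c * PowerSeries.mk g := by
    ext; simp only [coeff_mk, coeff_C_mul]
  rw [hTransform, this, mul_left_comm, coeff_C_mul, hTransform]

lemma hTransform_choose {i d : ℕ} (hid : i ≤ d) (j : ℕ) :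
    hTransform d j (fun u => u.choose i) =
      if i ≤ j then (-1) ^ (j - i) * ((d - i).choose (j - i) : ℤ) else 0 := by
  rw [hTransform, one_sub_X_pow_mul_mk_choose hid, coeff_X_pow_mul', coeff_one_sub_X_pow]

lemma hTransform_zero (d : ℕ) (g : ℕ → ℤ) : hTransform d 0 g = g 0 := by
  simp [hTransform, coeff_zero_eq_constantCoeff]

lemma hTransform_succ_succ (d j : ℕ) (g : ℕ → ℤ) :
    hTransform (d + 1) (j + 1) g = hTransform d (j + 1) g - hTransform d j g := by
  rw [hTransform, pow_succ', sub_mul, one_mul, sub_mul, map_sub, mul_assoc X, coeff_succ_X_mul]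
  rfl

lemma hTransform_succ_of_eq_zero (d j : ℕ) {g : ℕ → ℤ} (hg : g 0 = 0) :
    hTransform d (j + 1) g = hTransform d j (fun u => g (u + 1)) := by
  have : PowerSeries.mk g = X * PowerSeries.mk (fun u => g (u + 1)) := by
    ext (_ | n)
    · simp [hg]
    · rw [coeff_succ_X_mul, coeff_mk, coeff_mk]
  rw [hTransform, this, mul_left_comm, coeff_succ_X_mul]
  rfl

section HVector

variable {α : Type*}

lemma hnum_eq_hTransform (Δ : Finset (Finset α)) {d j : ℕ} (hj : j ≤ d) :
    hnum Δ d j =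
      hTransform d j (fun u => ∑ i ∈ range (d + 1), (fnum Δ i : ℤ) * u.choose i) := by
  rw [hTransform_sum, ← sum_range_add_sum_Ico _ (show j + 1 ≤ d + 1 by omega), hnum]
  have hhigh : ∑ i ∈ Ico (j + 1) (d + 1),
      hTransform d j (fun u => (fnum Δ i : ℤ) * u.choose i) = 0 := by
    refine sum_eq_zero fun i hi => ?_
    rw [mem_Ico] at hi
    rw [hTransform_const_mul, hTransform_choose (by omega), if_neg (by omega), mul_zero]
  rw [hhigh, add_zero]
  refine sum_congr rfl fun i hi => ?_
  rw [mem_range] at hi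
  rw [hTransform_const_mul, hTransform_choose (by omega), if_pos (by omega)]
  ring

theorem sum_pow_mul_add_one_pow_mul_hnum {R : Type*} [CommRing R] (Δ : Finset (Finset α))
    (d : ℕ) (x : R) :
    ∑ r ∈ range (d + 1), x ^ r * (x + 1) ^ (d - r) * (hnum Δ d r : R) =
      ∑ k ∈ range (d + 1), (fnum Δ k : R) * x ^ k := by
  simp only [hnum, Int.cast_sum, Int.cast_mul, Int.cast_pow, Int.cast_neg, Int.cast_one,
    Int.cast_natCast, mul_sum]
  rw [sum_comm' (t' := range (d + 1)) (s' := fun i => Ico i (d + 1)) (fun r i => by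
    simp only [mem_range, mem_Ico]; omega)]
  refine sum_congr rfl fun i hi => ?_
  have hid : i ≤ d := Nat.lt_succ_iff.mp (mem_range.mp hi)
  have hbinom : ∑ s ∈ range (d - i + 1),
      (-x) ^ s * (x + 1) ^ (d - i - s) * ((d - i).choose s : R) = 1 := by
    rw [← add_pow, neg_add_cancel_left, one_pow]
  calc _ = (fnum Δ i : R) * x ^ i *
        ∑ s ∈ range (d - i + 1), (-x) ^ s * (x + 1) ^ (d - i - s) * ((d - i).choose s : R) := by
        rw [mul_sum, sum_Ico_eq_sum_range, show d + 1 - i = d - i + 1 by omega]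
        refine sum_congr rfl fun s _ => ?_
        rw [show d - (i + s) = d - i - s by omega, Nat.add_sub_cancel_left, neg_pow]
        ring
    _ = _ := by rw [hbinom, mul_one]

end HVector

theorem sum_range_pow_mul_add_one_pow {R : Type*} [CommRing R] (x : R) {d r : ℕ}
    (hr : r ≤ d + 1) :
    ∑ t ∈ range r, x ^ t * (x + 1) ^ (d - t) =
      (x + 1) ^ (d + 1) - x ^ r * (x + 1) ^ (d + 1 - r) := by
  induction r with
  | zero => simp
  | succ r ih =>
    rw [sum_range_succ, ih (by omega), show d + 1 - r = d - r + 1 by omega,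
      show d + 1 - (r + 1) = d - r by omega]
    ring

/-- `A(d + 1, j, r + 1)` of the paper, the number of permutations of `S_{d+1}` with first value
`r + 1` and `j` descents; that interpretation is never needed, only the recursion
`restrictedEulerian_succ_succ`. -/
noncomputable def restrictedEulerian (d j r : ℕ) : ℤ :=
  hTransform d j (fun u => (u : ℤ) ^ r * (u + 1) ^ (d - r))

lemma restrictedEulerian_zero_zero (j : ℕ) :
    restrictedEulerian 0 j 0 = if j = 0 then 1 else 0 := by
  have h := hTransform_choose (le_refl 0) j
  simp only [Nat.choose_zero_right, Nat.cast_one, zero_le, if_true, Nat.sub_zero] at h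
  simp only [restrictedEulerian, pow_zero, Nat.sub_zero, one_mul]
  rw [h]
  rcases j with _ | j <;> simp

lemma restrictedEulerian_succ_succ {d r : ℕ} (hr : r ≤ d + 1) (j : ℕ) :
    restrictedEulerian (d + 1) (j + 1) r =
      ∑ t ∈ range r, restrictedEulerian d j t +
        ∑ t ∈ Ico r (d + 1), restrictedEulerian d (j + 1) t := by
  set G : ℕ → ℤ := fun u => (u : ℤ) ^ r * (u + 1) ^ (d + 1 - r)
  have hlow : ∑ t ∈ range r, restrictedEulerian d j t =
      hTransform d j (fun u => ((u : ℤ) + 1) ^ (d + 1)) - hTransform d j G := by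
    rw [← hTransform_sub]
    simp only [restrictedEulerian, ← hTransform_sum, sum_range_pow_mul_add_one_pow _ hr]
    rfl
  have hhigh : ∑ t ∈ Ico r (d + 1), restrictedEulerian d (j + 1) t =
      hTransform d (j + 1) G - hTransform d j (fun u => ((u : ℤ) + 1) ^ (d + 1)) := by
    have hshift := hTransform_succ_of_eq_zero d j (g := fun u => (u : ℤ) ^ (d + 1)) (by simp)
    push_cast at hshift
    rw [← hshift, ← hTransform_sub]
    simp only [restrictedEulerian, ← hTransform_sum, sum_Ico_eq_sub _ hr,
      sum_range_pow_mul_add_one_pow _ hr, sum_range_pow_mul_add_one_pow _ le_rfl]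
    rw [← hTransform_sub]
    congr 1
    funext u
    simp only [G, Nat.sub_self, pow_zero, mul_one]
    ring
  rw [hlow, hhigh, restrictedEulerian, hTransform_succ_succ]
  ring

lemma restrictedEulerian_nonneg {d r : ℕ} (hr : r ≤ d) (j : ℕ) :
    0 ≤ restrictedEulerian d j r := by
  induction d generalizing j r with
  | zero =>
    obtain rfl : r = 0 := by omega
    rw [restrictedEulerian_zero_zero]
    split_ifs <;> norm_num
  | succ d ih =>
    rcases j with _ | j
    · simp [restrictedEulerian, hTransform_zero]
    · rw [restrictedEulerian_succ_succ (by omega)]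
      refine add_nonneg (sum_nonneg fun t ht => ih ?_ _) (sum_nonneg fun t ht => ih ?_ _)
      · simp only [mem_range] at ht; omega
      · simp only [mem_Ico] at ht; omega

lemma one_le_restrictedEulerian_self {d j : ℕ} (hj : j ≤ d) :
    1 ≤ restrictedEulerian d j j := by
  induction d generalizing j with
  | zero =>
    obtain rfl : j = 0 := by omega
    simp [restrictedEulerian_zero_zero]
  | succ d ih =>
    rcases j with _ | j
    · simp [restrictedEulerian, hTransform_zero]
    · rw [restrictedEulerian_succ_succ (by omega)]
      have hdiag : 1 ≤ ∑ t ∈ range (j + 1), restrictedEulerian d j t :=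
        (ih (by omega)).trans (single_le_sum (fun t ht => restrictedEulerian_nonneg
          (by simp only [mem_range] at ht; omega) j) (self_mem_range_succ j))
      have hrest : 0 ≤ ∑ t ∈ Ico (j + 1) (d + 1), restrictedEulerian d (j + 1) t :=
        sum_nonneg fun t ht => restrictedEulerian_nonneg (by simp only [mem_Ico] at ht; omega) _
      linarith

/-- The number of chains `∅ ≠ s₁ ⊂ ⋯ ⊂ sᵢ = t` of a `k`-element set `t`: removing `t` leaves a
chain whose top is a proper subset of `t`. -/
def chainCount : ℕ → ℕ → ℕ
  | k, 0 => if k = 0 then 1 else 0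
  | k, i + 1 => ∑ m ∈ range k, k.choose m * chainCount m i

lemma sum_choose_mul_chainCount {k n : ℕ} (hkn : k ≤ n) (u : ℕ) :
    ∑ i ∈ range (n + 1), u.choose i * chainCount k i = u ^ k := by
  induction k using Nat.strong_induction_on generalizing n u with
  | _ k ihk =>
  induction u with
  | zero =>
    rw [sum_range_succ']
    rcases k with _ | k <;> simp [chainCount]
  | succ u ihu =>
    have hpascal : ∑ i ∈ range (n + 1), (u + 1).choose i * chainCount k i =
        ∑ i ∈ range (n + 1), u.choose i * chainCount k i +
          ∑ i ∈ range n, u.choose i * chainCount k (i + 1) := by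
      rw [sum_range_succ', sum_range_succ' (fun i => u.choose i * chainCount k i)]
      simp only [Nat.choose_succ_succ', add_mul, sum_add_distrib, Nat.choose_zero_right]
      ring
    have htop : ∑ i ∈ range n, u.choose i * chainCount k (i + 1) =
        ∑ m ∈ range k, u ^ m * k.choose m := by
      simp only [chainCount, mul_sum]
      rw [sum_comm]
      refine sum_congr rfl fun m hm => ?_
      have hmk : m < k := mem_range.mp hm
      obtain ⟨n', rfl⟩ : ∃ n', n = n' + 1 := ⟨n - 1, by omega⟩
      rw [← ihk m hmk (n := n') (by omega) u, sum_mul]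
      exact sum_congr rfl fun i _ => by ring
    rw [hpascal, ihu, htop, add_pow, sum_range_succ]
    simp only [one_pow, mul_one, Nat.choose_self, Nat.cast_id]
    ring

section Subdivision

variable {α : Type*} [DecidableEq α] {Δ : Finset (Finset α)}

lemma mem_sd {c : Finset (Finset α)} :
    c ∈ sd Δ ↔ c ⊆ Δ.erase ∅ ∧ ∀ s ∈ c, ∀ t ∈ c, s ⊆ t ∨ t ⊆ s := by
  simp [sd]

lemma mem_sd_of_subset {c c' : Finset (Finset α)} (hc : c ∈ sd Δ) (h : c' ⊆ c) :
    c' ∈ sd Δ := by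
  rw [mem_sd] at hc ⊢
  exact ⟨h.trans hc.1, fun s hs t ht => hc.2 s (h hs) t (h ht)⟩

lemma insert_mem_sd {c : Finset (Finset α)} {t : Finset α} (hc : c ∈ sd Δ) (ht : t ∈ Δ)
    (ht₀ : t ≠ ∅) (hle : ∀ s ∈ c, s ⊆ t) : insert t c ∈ sd Δ := by
  rw [mem_sd] at hc ⊢
  refine ⟨insert_subset (mem_erase.2 ⟨ht₀, ht⟩) hc.1, ?_⟩
  simp only [mem_insert, forall_eq_or_imp, subset_refl, true_or, true_and]
  exact ⟨fun s hs => .inr (hle s hs), fun s hs => ⟨.inl (hle s hs), hc.2 s hs⟩⟩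

lemma sup_mem_of_chain {c : Finset (Finset α)} (hc : ∀ s ∈ c, ∀ t ∈ c, s ⊆ t ∨ t ⊆ s)
    (hne : c.Nonempty) : c.sup id ∈ c := by
  have hclosed : SupClosed (c : Set (Finset α)) := fun s hs t ht => by
    rcases hc s hs t ht with h | h
    · rwa [sup_eq_right.2 h]
    · rwa [sup_eq_left.2 h]
  exact hclosed.finsetSup_mem hne fun s hs => hs

lemma sup_mem_of_mem_sd (hΔ : IsComplex Δ) {c : Finset (Finset α)} (hc : c ∈ sd Δ) :
    c.sup id ∈ Δ := by
  rcases c.eq_empty_or_nonempty with rfl | hne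
  · exact hΔ.1
  · rw [mem_sd] at hc
    exact mem_of_mem_erase (hc.1 (sup_mem_of_chain hc.2 hne))

lemma card_sd_filter_sup_eq_succ {t : Finset α} (ht : t ∈ Δ) (i : ℕ) :
    #{c ∈ sd Δ | #c = i + 1 ∧ c.sup id = t} = #{c ∈ sd Δ | #c = i ∧ c.sup id ⊂ t} := by
  refine card_nbij' (fun c => c.erase t) (fun c => insert t c) ?_ ?_ ?_ ?_
  · intro c hc
    simp only [mem_coe, mem_filter] at hc ⊢
    obtain ⟨hc, hcard, rfl⟩ := hc
    have hne : c.Nonempty := card_pos.1 (by omega)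
    have htop : c.sup id ∈ c := sup_mem_of_chain (mem_sd.1 hc).2 hne
    refine ⟨mem_sd_of_subset hc (erase_subset _ _), by rw [card_erase_of_mem htop, hcard]; rfl,
      ?_⟩
    refine ssubset_of_subset_of_ne (sup_mono (erase_subset _ _)) fun h => ?_
    rcases (c.erase (c.sup id)).eq_empty_or_nonempty with he | hne'
    · rw [he, sup_empty] at h
      exact (mem_erase.1 ((mem_sd.1 hc).1 htop)).1 h.symm
    · have hchain := (mem_sd.1 (mem_sd_of_subset hc (erase_subset (c.sup id) c))).2
      have hmem := sup_mem_of_chain hchain hne'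
      rw [h] at hmem
      exact notMem_erase _ _ hmem
  · intro c hc
    simp only [mem_coe, mem_filter] at hc ⊢
    obtain ⟨hc, hcard, hlt⟩ := hc
    have hle : ∀ s ∈ c, s ⊆ t := fun s hs => (le_sup (f := id) hs).trans hlt.le
    have htc : t ∉ c := fun h => hlt.not_ge (le_sup (f := id) h)
    refine ⟨insert_mem_sd hc ht (ne_bot_of_gt hlt) hle, by rw [card_insert_of_notMem htc, hcard],
      by rw [sup_insert, id, sup_eq_left.2 hlt.le]⟩
  · intro c hc
    simp only [mem_coe, mem_filter] at hc
    obtain ⟨hc, hcard, rfl⟩ := hc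
    exact insert_erase (sup_mem_of_chain (mem_sd.1 hc).2 (card_pos.1 (by omega)))
  · intro c hc
    simp only [mem_coe, mem_filter] at hc
    exact erase_insert fun h => hc.2.2.not_ge (le_sup (f := id) h)

lemma card_sd_filter_sup_eq (hΔ : IsComplex Δ) {t : Finset α} (ht : t ∈ Δ) (i : ℕ) :
    #{c ∈ sd Δ | #c = i ∧ c.sup id = t} = chainCount #t i := by
  induction i generalizing t with
  | zero =>
    have hempty : (∅ : Finset (Finset α)) ∈ sd Δ := by simp [mem_sd]
    rcases t.eq_empty_or_nonempty with rfl | hne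
    · rw [card_empty, chainCount, if_pos rfl, card_eq_one]
      refine ⟨∅, eq_singleton_iff_unique_mem.2 ⟨by simp [hempty], fun c hc => ?_⟩⟩
      exact card_eq_zero.1 (mem_filter.1 hc).2.1
    · rw [chainCount, if_neg hne.card_pos.ne', card_eq_zero, filter_eq_empty_iff]
      rintro c - ⟨hc, rfl⟩
      rw [card_eq_zero.1 hc, sup_empty] at hne
      exact not_nonempty_empty hne
  | succ i ih =>
    rw [card_sd_filter_sup_eq_succ ht, card_eq_sum_card_fiberwise (f := fun c => c.sup id)
      (t := t.ssubsets) fun c hc => mem_ssubsets.2 (mem_filter.1 hc).2.2]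
    have hfiber : ∀ s ∈ t.ssubsets,
        #{c ∈ {c ∈ sd Δ | #c = i ∧ c.sup id ⊂ t} | c.sup id = s} = chainCount #s i := by
      intro s hs
      rw [filter_filter, ← ih (hΔ.2 t ht s (mem_ssubsets.1 hs).subset)]
      congr 1
      refine filter_congr fun c _ => ?_
      constructor
      · rintro ⟨⟨hc, -⟩, hs'⟩; exact ⟨hc, hs'⟩
      · rintro ⟨hc, rfl⟩; exact ⟨⟨hc, mem_ssubsets.1 hs⟩, rfl⟩
    rw [sum_congr rfl hfiber, chainCount]
    have hpow := sum_powerset_apply_card (fun m => chainCount m i) (x := t)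
    rw [← sum_erase_add _ _ (mem_powerset_self t), sum_range_succ, Nat.choose_self, one_smul,
      add_left_inj] at hpow
    simp only [smul_eq_mul] at hpow
    exact hpow

lemma fnum_sd (hΔ : IsComplex Δ) {d : ℕ} (hdim : ∀ s ∈ Δ, #s ≤ d) (i : ℕ) :
    fnum (sd Δ) i = ∑ k ∈ range (d + 1), fnum Δ k * chainCount k i := by
  rw [fnum, card_eq_sum_card_fiberwise (f := fun c => c.sup id) (t := Δ)
    fun c hc => sup_mem_of_mem_sd hΔ (mem_filter.1 hc).1]
  simp_rw [filter_filter]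
  rw [sum_congr rfl fun t ht => card_sd_filter_sup_eq hΔ ht i,
    ← sum_fiberwise_of_maps_to (g := card) (t := range (d + 1))
      fun t ht => mem_range.2 (Nat.lt_succ_of_le (hdim t ht))]
  refine sum_congr rfl fun k _ => ?_
  rw [sum_congr rfl fun t ht => by rw [(mem_filter.1 ht).2], sum_const, fnum, smul_eq_mul]

lemma sum_fnum_sd_mul_choose (hΔ : IsComplex Δ) {d : ℕ} (hdim : ∀ s ∈ Δ, #s ≤ d) (u : ℕ) :
    ∑ i ∈ range (d + 1), fnum (sd Δ) i * u.choose i =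
      ∑ k ∈ range (d + 1), fnum Δ k * u ^ k := by
  simp_rw [fnum_sd hΔ hdim, sum_mul]
  rw [sum_comm]
  refine sum_congr rfl fun k hk => ?_
  rw [← sum_choose_mul_chainCount (Nat.lt_succ_iff.1 (mem_range.1 hk)) u, mul_sum]
  exact sum_congr rfl fun i _ => by ring

lemma hnum_sd (hΔ : IsComplex Δ) {d j : ℕ} (hdim : ∀ s ∈ Δ, #s ≤ d) (hj : j ≤ d) :
    hnum (sd Δ) d j = ∑ r ∈ range (d + 1), restrictedEulerian d j r * hnum Δ d r := by
  have hpoly : (fun u : ℕ => ∑ i ∈ range (d + 1), (fnum (sd Δ) i : ℤ) * u.choose i) =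
      fun u : ℕ => ∑ r ∈ range (d + 1), hnum Δ d r * ((u : ℤ) ^ r * (u + 1) ^ (d - r)) := by
    funext u
    have h := congrArg (Nat.cast (R := ℤ)) (sum_fnum_sd_mul_choose hΔ hdim u)
    push_cast at h
    rw [h, ← sum_pow_mul_add_one_pow_mul_hnum]
    exact sum_congr rfl fun r _ => by rw [Int.cast_id]; ring
  simp only [hnum_eq_hTransform (sd Δ) hj, hpoly, hTransform_sum, hTransform_const_mul,
    restrictedEulerian, mul_comm]

end Subdivision

/-- If the `h`-vector of a `(d-1)`-dimensional simplicial complex is nonnegative,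
then the `h`-vector of its barycentric subdivision dominates it entrywise. -/
theorem hvector_sd_monotone {α : Type*} [DecidableEq α] (Δ : Finset (Finset α))
    (d : ℕ) (hΔ : IsComplex Δ) (hdim : HasDim Δ d)
    (hpos : ∀ i ≤ d, 0 ≤ hnum Δ d i) :
    ∀ i ≤ d, hnum Δ d i ≤ hnum (sd Δ) d i := by
  intro i hi
  have hmem : i ∈ range (d + 1) := mem_range.2 (Nat.lt_succ_of_le hi)
  rw [hnum_sd hΔ hdim.1 hi, ← sum_erase_add _ _ hmem]
  have hrest : 0 ≤ ∑ r ∈ (range (d + 1)).erase i, restrictedEulerian d i r * hnum Δ d r :=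
    sum_nonneg fun r hr =>
      have hr : r ≤ d := Nat.lt_succ_iff.1 (mem_range.1 (mem_of_mem_erase hr))
      mul_nonneg (restrictedEulerian_nonneg hr i) (hpos r hr)
  have hdiag : hnum Δ d i ≤ restrictedEulerian d i i * hnum Δ d i :=
    le_mul_of_one_le_left (hpos i hi) (one_le_restrictedEulerian_self hi)
  linarith
end

section
/- For d ≥ 2, all entries A(d+1, j, i) with 1 ≤ j ≤ d-1 and 2 ≤ i ≤ d are strictly positive; that is, for any such j and i there exists a permutation σ ∈ S_{d+1} with σ(1) = i and exactly j descents. -/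
open Finset

lemma exists_perm_des {n : ℕ} (g : ℕ → ℕ)
    (hlt : ∀ k, k < n → g k < n)
    (hinj : ∀ k1, k1 < n → ∀ k2, k2 < n → g k1 = g k2 → k1 = k2) :
    ∃ σ : Equiv.Perm (Fin n), (∀ k : Fin n, (σ k : ℕ) = g (k : ℕ)) ∧
      des σ = ((Finset.range (n-1)).filter (fun k => g (k+1) < g k)).card := by
  have hf : Function.Injective (fun k : Fin n => (⟨g (k : ℕ), hlt _ k.isLt⟩ : Fin n)) := by
    intro k1 k2 h
    exact Fin.ext (hinj _ k1.isLt _ k2.isLt (by simpa using congrArg Fin.val h))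
  have hb := Finite.injective_iff_bijective.mp hf
  have hsub : ∀ m ∈ (Finset.range (n-1)).filter (fun k => g (k+1) < g k), m < n := by
    intro m hm
    simp only [Finset.mem_filter, Finset.mem_range] at hm
    omega
  refine ⟨Equiv.ofBijective _ hb, fun k => rfl, ?_⟩
  have hset : descSet (Equiv.ofBijective _ hb) = Finset.attachFin _ hsub := by
    ext k
    simp only [descSet, Finset.mem_filter, Finset.mem_univ, true_and,
      Finset.mem_attachFin, Finset.mem_range, Equiv.ofBijective_apply]
    constructor
    · rintro ⟨m, hm1, hm2⟩
      have hmlt : (m : ℕ) < n := m.isLt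
      have h2 : g (m : ℕ) < g (k : ℕ) := hm2
      rw [hm1] at h2
      exact ⟨by omega, h2⟩
    · rintro ⟨hk, hgk⟩
      exact ⟨⟨(k : ℕ) + 1, by omega⟩, rfl, hgk⟩
  rw [des, hset, Finset.card_attachFin]

theorem A_entries_pos' (d i j : ℕ) (hd : 2 ≤ d) (hj1 : 1 ≤ j) (hjd : j ≤ d - 1)
    (hi1 : 2 ≤ i) (hid : i ≤ d) :
    Nonempty {σ : Equiv.Perm (Fin (d+1)) //
    (∀ k : Fin (d+1), (k : ℕ) = 0 → (σ k : ℕ) + 1 = i) ∧ (des σ : ℤ) = (j : ℤ)} := by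
  set a := i - 1 with ha
  have ha1 : 1 ≤ a := by omega
  have had : a ≤ d - 1 := by omega
  rcases le_or_gt j a with hc | hc
  · -- case j ≤ a : g k = a+k / d-k / k-(d-a+j)
    obtain ⟨σ, hσ, hdes⟩ := exists_perm_des (n := d+1)
      (fun k => if k ≤ d - a then a + k else if k ≤ d - a + j - 1 then d - k else k - (d - a + j))
      (by intro k hk; split_ifs <;> omega)
      (by intro k1 hk1 k2 hk2 h; split_ifs at h <;> omega)
    refine ⟨σ, fun k hk => ?_, ?_⟩
    · rw [hσ k, hk]
      rw [if_pos (Nat.zero_le _)]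
      omega
    · rw [hdes]
      have : ((Finset.range (d+1-1)).filter
          (fun k => (if k+1 ≤ d - a then a + (k+1) else if k+1 ≤ d - a + j - 1 then d - (k+1) else k+1 - (d - a + j)) <
            (if k ≤ d - a then a + k else if k ≤ d - a + j - 1 then d - k else k - (d - a + j))))
          = Finset.Ico (d - a) (d - a + j) := by
        ext k
        simp only [Finset.mem_filter, Finset.mem_range, Finset.mem_Ico]
        constructor
        · rintro ⟨hk, hlt⟩
          split_ifs at hlt <;> omega
        · rintro ⟨h1, h2⟩
          constructor
          · omega
          · split_ifs <;> omega
      rw [this, Nat.card_Ico]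
      omega
  · -- case j > a : g k = a-k / d-k+a+1 / k-j+a
    obtain ⟨σ, hσ, hdes⟩ := exists_perm_des (n := d+1)
      (fun k => if k ≤ a then a - k else if k ≤ j then d - k + a + 1 else k - j + a)
      (by intro k hk; split_ifs <;> omega)
      (by intro k1 hk1 k2 hk2 h; split_ifs at h <;> omega)
    refine ⟨σ, fun k hk => ?_, ?_⟩
    · rw [hσ k, hk]
      rw [if_pos (Nat.zero_le _)]
      omega
    · rw [hdes]
      have : ((Finset.range (d+1-1)).filter
          (fun k => (if k+1 ≤ a then a - (k+1) else if k+1 ≤ j then d - (k+1) + a + 1 else k+1 - j + a) <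
            (if k ≤ a then a - k else if k ≤ j then d - k + a + 1 else k - j + a)))
          = (Finset.range (j+1)).erase a := by
        ext k
        simp only [Finset.mem_filter, Finset.mem_range, Finset.mem_erase]
        constructor
        · rintro ⟨hk, hlt⟩
          split_ifs at hlt <;> omega
        · rintro ⟨h1, h2⟩
          constructor
          · omega
          · split_ifs <;> omega
      rw [this, Finset.card_erase_of_mem (by simp; omega), Finset.card_range]
      push_cast
      omega

/-- For `d ≥ 2`, all entries `A(d+1,j,i)` with `1 ≤ j ≤ d-1` and `2 ≤ i ≤ d` are
strictly positive: there is a permutation `σ ∈ S_{d+1}` with `σ(1) = i` and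
exactly `j` descents. -/
theorem A_entries_pos (d i j : ℕ) (hd : 2 ≤ d) (hj1 : 1 ≤ j) (hjd : j ≤ d - 1)
    (hi1 : 2 ≤ i) (hid : i ≤ d) :
    0 < A (d + 1) (j : ℤ) i := by
  have h := A_entries_pos' d i j hd hj1 hjd hi1 hid
  unfold A
  haveI := h
  exact Nat.card_pos
end
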